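/- arXiv:math/0307396 — 7 statements merged into one kernel-verified Lean document; each statement's English description precedes it below -/
import Mathlib

section
/- Let H be a finitely generated abelian group. The group homomorphism from Λ³H to the product ∏_{n>0} Hom(Λ³(H^{(n)}), ℤ/nℤ) sending X to the family of linear maps (⟨-, X⟩^{(n)})_{n>0} is injective. Equivalently: if X ∈ Λ³H satisfies ⟨w, X⟩^{(n)} = 0 for every integer n > 0 and every w ∈ Λ³(H^{(n)}), then X = 0. -/
/-!
By the structure theorem, `H` has generators `g k` with `d k • g k = 0` (`d k = 0` on the free
part) whose coordinate functions `H → ℤ/n` exist for every `n ∣ d k`. The sorted wedges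
`g_s = g s₁ ∧ g s₂ ∧ g s₃` span `Λ³H`, so `X = ∑ c_s • g_s`. Pairing `X` with the wedge of the
coordinate functions of `s` at level `n` picks out `c_s mod n`, since the pairing is a determinant.
This holds for every `n > 0` dividing all `d k` with `k ∈ s`, in particular for every divisor of the
order of `g_s`; hence that order divides `c_s` and `c_s • g_s = 0`.
-/

/-- The decomposable element `x₁ ∧ x₂ ∧ x₃` of the third exterior power `Λ³M = ⋀[ℤ]^3 M`. -/
noncomputable def wedge3 {M : Type*} [AddCommGroup M] (x₁ x₂ x₃ : M) : ⋀[ℤ]^3 M :=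
  ⟨ExteriorAlgebra.ιMulti ℤ 3 ![x₁, x₂, x₃],
    ExteriorAlgebra.ιMulti_range ℤ 3 (Set.mem_range_self ![x₁, x₂, x₃])⟩

open Set exteriorPower

/-- Encodes `H ≃ ⨁ k, ZMod (d k)` with `g k` generating the `k`-th summand (`ZMod 0 = ℤ`, so
`d k = 0` marks a free summand); the `k`-th coordinate is then defined modulo each `n ∣ d k`. -/
structure IsCyclicBasis_s0 {κ H : Type*} [AddCommGroup H] (d : κ → ℕ) (g : κ → H) : Prop where
  span_eq_top : Submodule.span ℤ (range g) = ⊤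
  nsmul_eq_zero : ∀ k, d k • g k = 0
  exists_coord : ∀ (n : ℕ) (k : κ), n ∣ d k →
    ∃ φ : H →+ ZMod n, φ (g k) = 1 ∧ ∀ l ≠ k, φ (g l) = 0

namespace IsCyclicBasis_s0

variable {κ κ' H H' : Type*} [AddCommGroup H] [AddCommGroup H'] {d : κ → ℕ} {g : κ → H}

theorem map (hg : IsCyclicBasis_s0 d g) (e : H ≃+ H') : IsCyclicBasis_s0 d (e ∘ g) where
  span_eq_top := by
    change Submodule.span ℤ (range (e.toIntLinearEquiv.toLinearMap ∘ g)) = ⊤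
    rw [range_comp, Submodule.span_image, hg.span_eq_top, Submodule.map_top,
      LinearEquiv.range]
  nsmul_eq_zero k := by simp [← map_nsmul, hg.nsmul_eq_zero k]
  exists_coord n k hk := by
    obtain ⟨φ, hφk, hφ⟩ := hg.exists_coord n k hk
    exact ⟨φ.comp e.symm.toAddMonoidHom, by simpa using hφk, fun l hl => by simpa using hφ l hl⟩

theorem prod (hg : IsCyclicBasis_s0 d g) {d' : κ' → ℕ} {g' : κ' → H'} (hg' : IsCyclicBasis_s0 d' g') :
    IsCyclicBasis_s0 (Sum.elim d d')
      (Sum.elim (AddMonoidHom.inl H H' ∘ g) (AddMonoidHom.inr H H' ∘ g')) where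
  span_eq_top := by
    change Submodule.span ℤ (range (Sum.elim (LinearMap.inl ℤ H H' ∘ g)
      (LinearMap.inr ℤ H H' ∘ g'))) = ⊤
    rw [Sum.elim_range, Submodule.span_union, range_comp, range_comp, Submodule.span_image,
      Submodule.span_image, hg.span_eq_top, hg'.span_eq_top, Submodule.map_top,
      Submodule.map_top, LinearMap.sup_range_inl_inr]
  nsmul_eq_zero := by
    rintro (k | k)
    · simp [hg.nsmul_eq_zero k]
    · simp [hg'.nsmul_eq_zero k]
  exists_coord := by
    rintro n (k | k) hk
    · obtain ⟨φ, hφk, hφ⟩ := hg.exists_coord n k hk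
      exact ⟨φ.comp (AddMonoidHom.fst H H'), by simpa using hφk,
        by rintro (l | l) hl <;> simp_all⟩
    · obtain ⟨φ, hφk, hφ⟩ := hg'.exists_coord n k hk
      exact ⟨φ.comp (AddMonoidHom.snd H H'), by simpa using hφk,
        by rintro (l | l) hl <;> simp_all⟩

end IsCyclicBasis_s0

theorem isCyclicBasis_finsupp_single (κ : Type*) :
    IsCyclicBasis_s0 (fun _ : κ => 0) (fun k => Finsupp.single k (1 : ℤ)) where
  span_eq_top := by rw [← Finsupp.coe_basisSingleOne]; exact Finsupp.basisSingleOne.span_eq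
  nsmul_eq_zero _ := zero_smul _ _
  exists_coord n k _ :=
    ⟨(Int.castAddHom (ZMod n)).comp (Finsupp.applyAddHom k), by simp,
      fun l hl => by simp [hl]⟩

theorem isCyclicBasis_directSum_zmod {κ : Type*} [DecidableEq κ] (d : κ → ℕ) :
    IsCyclicBasis_s0 d (fun k => DirectSum.of (fun k => ZMod (d k)) k 1) where
  span_eq_top := by
    refine Submodule.eq_top_iff'.2 fun x => ?_
    induction x using DirectSum.induction_on with
    | zero => exact zero_mem _
    | of k x =>
      obtain ⟨z, rfl⟩ := ZMod.intCast_surjective x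
      rw [← Int.smul_one_eq_cast, map_zsmul]
      exact Submodule.smul_mem _ z (Submodule.subset_span (mem_range_self k))
    | add x y hx hy => exact add_mem hx hy
  nsmul_eq_zero k := by rw [← map_nsmul, nsmul_one, ZMod.natCast_self, map_zero]
  exists_coord n k hk :=
    ⟨(ZMod.castHom hk (ZMod n)).toAddMonoidHom.comp
      (DirectSum.component ℤ κ (fun k => ZMod (d k)) k).toAddMonoidHom,
      by simp [← DirectSum.lof_eq_of ℤ, ZMod.cast_one hk],
      fun l hl => by simp [← DirectSum.lof_eq_of ℤ, DirectSum.component.of, hl]⟩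

theorem AddGroup.FG.exists_isCyclicBasis (H : Type*) [AddCommGroup H] [AddGroup.FG H] :
    ∃ (κ : Type) (_ : Fintype κ) (d : κ → ℕ) (g : κ → H), IsCyclicBasis_s0 d g := by
  classical
  obtain ⟨r, ι, _, p, -, e, ⟨ψ⟩⟩ := AddCommGroup.equiv_free_prod_directSum_zmod H
  exact ⟨Fin r ⊕ ι, inferInstance, _, _,
    ((isCyclicBasis_finsupp_single _).prod (isCyclicBasis_directSum_zmod _)).map ψ.symm⟩

theorem AlternatingMap.smul_apply_eq_zero {R M N ι : Type*} [Semiring R] [AddCommMonoid M]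
    [Module R M] [AddCommMonoid N] [Module R N] [DecidableEq ι] (f : M [⋀^ι]→ₗ[R] N)
    {v : ι → M} {i : ι} {r : R} (h : r • v i = 0) : r • f v = 0 := by
  rw [← Function.update_eq_self i v, ← f.map_update_smul, h, f.map_update_zero]

theorem Int.natCast_dvd_of_forall_dvd {m : ℕ} {c : ℤ}
    (h : ∀ n : ℕ, 0 < n → n ∣ m → (n : ℤ) ∣ c) : (m : ℤ) ∣ c := by
  rcases m.eq_zero_or_pos with rfl | hm
  · obtain rfl := Int.eq_zero_of_dvd_of_natAbs_lt_natAbs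
      (h (c.natAbs + 1) c.natAbs.succ_pos (dvd_zero _)) (by rw [Int.natAbs_natCast]; omega)
    exact dvd_zero _
  · exact h m hm dvd_rfl

namespace Set.powersetCard

variable {κ R : Type*} [LinearOrder κ] [CommRing R] {m : ℕ}

theorem det_eq_ite_of_dual (s s' : powersetCard κ m) (A : Fin m → κ → R)
    (hA : ∀ i, A i (ofFinEmbEquiv.symm s i) = 1)
    (hA' : ∀ i l, l ≠ ofFinEmbEquiv.symm s i → A i l = 0) :
    (Matrix.of fun i j => A i (ofFinEmbEquiv.symm s' j)).det = if s = s' then 1 else 0 := by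
  split_ifs with h
  · subst h
    convert Matrix.det_one (n := Fin m) (R := R) using 2
    ext i j
    rcases eq_or_ne i j with rfl | hij
    · simp [hA]
    · simp [Matrix.one_apply_ne hij, hA' _ _ ((ofFinEmbEquiv.symm s).injective.ne hij).symm]
  · obtain ⟨x, hxs', hxs⟩ := (exists_mem_notMem_iff_ne s' s).mp (Ne.symm h)
    rw [← mem_range_ofFinEmbEquiv_symm_iff_mem] at hxs' hxs
    obtain ⟨j, rfl⟩ := hxs'
    exact Matrix.det_eq_zero_of_column_eq_zero j fun i => hA' i _ fun h => hxs ⟨i, h.symm⟩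

end Set.powersetCard

theorem IsCyclicBasis_s0.zsmul_ιMulti_family_eq_zero {κ H : Type*} [AddCommGroup H] [LinearOrder κ]
    {d : κ → ℕ} {g : κ → H} (hg : IsCyclicBasis_s0 d g) {m : ℕ} (s : powersetCard κ m) {c : ℤ}
    (hc : ∀ n : ℕ, 0 < n → (∀ k ∈ s, n ∣ d k) → (c : ZMod n) = 0) :
    c • ιMulti_family ℤ m g s = 0 := by
  rw [← addOrderOf_dvd_iff_zsmul_eq_zero]
  refine Int.natCast_dvd_of_forall_dvd fun n hn hno =>
    (ZMod.intCast_zmod_eq_zero_iff_dvd c n).1 (hc n hn fun k hk => hno.trans ?_)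
  obtain ⟨i, hi⟩ := (powersetCard.mem_range_ofFinEmbEquiv_symm_iff_mem s k).2 hk
  have hgk : (d k : ℤ) • (g ∘ powersetCard.ofFinEmbEquiv.symm s) i = 0 := by
    rw [Function.comp_apply, hi, natCast_zsmul]
    exact hg.nsmul_eq_zero k
  exact Int.natCast_dvd_natCast.1
    (addOrderOf_dvd_iff_zsmul_eq_zero.2 ((ιMulti ℤ m).smul_apply_eq_zero hgk))

theorem pairing_ιMulti_eq_det {H : Type*} [AddCommGroup H] {n : ℕ}
    (P : (⋀[ℤ]^3 (H →+ ZMod n)) →ₗ[ℤ] (⋀[ℤ]^3 H) →ₗ[ℤ] ZMod n)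
    (hP : ∀ (y₁ y₂ y₃ : H →+ ZMod n) (x₁ x₂ x₃ : H),
      P (wedge3 y₁ y₂ y₃) (wedge3 x₁ x₂ x₃) =
        ∑ σ : Equiv.Perm (Fin 3), ((Equiv.Perm.sign σ : ℤ) : ZMod n) *
          ∏ i : Fin 3, ![y₁, y₂, y₃] (σ i) (![x₁, x₂, x₃] i))
    (y : Fin 3 → H →+ ZMod n) (x : Fin 3 → H) :
    P (ιMulti ℤ 3 y) (ιMulti ℤ 3 x) = (Matrix.of fun i j => y i (x j)).det := by
  obtain ⟨y₁, y₂, y₃, rfl⟩ : ∃ y₁ y₂ y₃, y = ![y₁, y₂, y₃] :=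
    ⟨y 0, y 1, y 2, by ext i; fin_cases i <;> rfl⟩
  obtain ⟨x₁, x₂, x₃, rfl⟩ : ∃ x₁ x₂ x₃, x = ![x₁, x₂, x₃] :=
    ⟨x 0, x 1, x 2, by ext i; fin_cases i <;> rfl⟩
  rw [Matrix.det_apply']
  exact hP y₁ y₂ y₃ x₁ x₂ x₃

/-- Let `H` be a finitely generated abelian group. If `X ∈ Λ³H` satisfies
`⟨w, X⟩⁽ⁿ⁾ = 0` for every integer `n > 0` and every `w ∈ Λ³(H⁽ⁿ⁾)`, then `X = 0`.
Here `H⁽ⁿ⁾ = Hom(H, ℤ/nℤ)` and `⟨-,-⟩⁽ⁿ⁾ : Λ³(H⁽ⁿ⁾) × Λ³H → ℤ/nℤ` is the ℤ-bilinear pairing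
determined on decomposable elements by
`⟨y₁∧y₂∧y₃, x₁∧x₂∧x₃⟩⁽ⁿ⁾ = ∑_{σ∈S₃} sgn(σ)·y_{σ(1)}(x₁)·y_{σ(2)}(x₂)·y_{σ(3)}(x₃)`. -/
theorem stmt0 (H : Type*) [AddCommGroup H] (hFG : AddGroup.FG H)
    (pairing : ∀ n : ℕ, 0 < n → (⋀[ℤ]^3 (H →+ ZMod n)) →ₗ[ℤ] (⋀[ℤ]^3 H) →ₗ[ℤ] ZMod n)
    (hpair : ∀ (n : ℕ) (hn : 0 < n) (y₁ y₂ y₃ : H →+ ZMod n) (x₁ x₂ x₃ : H),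
      pairing n hn (wedge3 y₁ y₂ y₃) (wedge3 x₁ x₂ x₃) =
        ∑ σ : Equiv.Perm (Fin 3), ((Equiv.Perm.sign σ : ℤ) : ZMod n) *
          ∏ i : Fin 3, ![y₁, y₂, y₃] (σ i) (![x₁, x₂, x₃] i))
    (X : ⋀[ℤ]^3 H)
    (hX : ∀ (n : ℕ) (hn : 0 < n) (w : ⋀[ℤ]^3 (H →+ ZMod n)), pairing n hn w X = 0) :
    X = 0 := by
  obtain ⟨κ, _, d, g, hg⟩ := AddGroup.FG.exists_isCyclicBasis H
  let _ : LinearOrder κ := LinearOrder.lift' _ (Fintype.equivFin κ).injective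
  obtain ⟨c, rfl⟩ := (Submodule.mem_span_range_iff_exists_fun ℤ).1
    ((ιMulti_family_span_of_span ℤ (n := 3) hg.span_eq_top).symm ▸ Submodule.mem_top : X ∈ _)
  refine Finset.sum_eq_zero fun s _ => hg.zsmul_ιMulti_family_eq_zero s fun n hn hdvd => ?_
  choose φ hφ hφ' using fun i => hg.exists_coord n _
    (hdvd _ ((powersetCard.mem_range_ofFinEmbEquiv_symm_iff_mem s _).1 (mem_range_self i)))
  have hdual (s' : powersetCard κ 3) :
      pairing n hn (ιMulti ℤ 3 φ) (ιMulti_family ℤ 3 g s') = if s = s' then 1 else 0 :=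
    (pairing_ιMulti_eq_det _ (hpair n hn) _ _).trans
      (powersetCard.det_eq_ite_of_dual s s' (fun i l => φ i (g l)) hφ hφ')
  simpa [hdual] using hX n hn (ιMulti ℤ 3 φ)
end

section
/- Let H be a finitely generated abelian group and let X ∈ Λ³H satisfy ⟨w, X⟩^{(m)} = 0 for every integer m > 0 and every w ∈ Λ³(H^{(m)}). Let n ≥ 1 be an integer and p a prime number. If the image of X in (Λ³H) ⊗ ℤ/nℤ is zero, then the image of X in (Λ³H) ⊗ ℤ/npℤ is also zero. -/
/-!
Write `H ≅ ∏ᵢ ℤ/qᵢ` (with `qᵢ = 0` allowed) and let `eᵢ` be the standard generators. The sorted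
wedges `e_s = e_{s₁} ∧ e_{s₂} ∧ e_{s₃}` span `Λ³H`, and `e_s` is killed by `d_s = gcd_{i ∈ s} qᵢ`.
For `m ∣ d_s` the coordinate maps `τᵢ : H → ℤ/m` (`i ∈ s`) are dual to the `eᵢ`, so pairing
`X = ∑ c_s e_s` with `τ_{s₁} ∧ τ_{s₂} ∧ τ_{s₃}` returns `c_s mod m`. Taking `m = d_s` (or every
`m` when `d_s = 0`) gives `d_s ∣ c_s`, hence `c_s e_s = 0` for all `s`: the hypothesis on `X`
already forces `X = 0`.
-/

open scoped TensorProduct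

set_option synthInstance.maxHeartbeats 1000000
set_option maxHeartbeats 1000000

open exteriorPower Set.powersetCard

lemma wedge3_eq_ιMulti {M : Type*} [AddCommGroup M] (x₁ x₂ x₃ : M) :
    wedge3 x₁ x₂ x₃ = ιMulti ℤ 3 ![x₁, x₂, x₃] := rfl

lemma zsmul_eq_zero_of_forall_intCast_eq_zero {A : Type*} [AddCommGroup A] {w : A} {d : ℕ}
    {c : ℤ} (hd : d • w = 0) (hc : ∀ m : ℕ, 0 < m → m ∣ d → (c : ZMod m) = 0) : c • w = 0 := by
  rcases Nat.eq_zero_or_pos d with rfl | hd0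
  · have h := (ZMod.intCast_zmod_eq_zero_iff_dvd c _).mp
      (hc (c.natAbs + 1) c.natAbs.succ_pos (dvd_zero _))
    rw [Int.eq_zero_of_dvd_of_natAbs_lt_natAbs h (by rw [Int.natAbs_natCast]; omega), zero_smul]
  · obtain ⟨t, rfl⟩ := (ZMod.intCast_zmod_eq_zero_iff_dvd c d).mp (hc d hd0 dvd_rfl)
    rw [mul_comm, mul_zsmul, natCast_zsmul, hd, zsmul_zero]

theorem AddCommGroup.exists_addEquiv_pi_zmod (H : Type*) [AddCommGroup H] [AddGroup.FG H] :
    ∃ (ι : Type) (_ : Fintype ι) (q : ι → ℕ), Nonempty (H ≃+ ((i : ι) → ZMod (q i))) := by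
  obtain ⟨r, ι, _, p, -, e, ⟨φ⟩⟩ := AddCommGroup.equiv_free_prod_directSum_zmod H
  -- `ZMod 0` is `ℤ` by definition, so the free part becomes the factors with `q = 0`.
  refine ⟨Fin r ⊕ ι, inferInstance, Sum.elim 0 fun i => p i ^ e i, ⟨?_⟩⟩
  exact φ.trans <| ((Finsupp.linearEquivFunOnFinite ℤ ℤ (Fin r)).toAddEquiv.prodCongr
    (DirectSum.addEquivProd _)).trans
    (LinearEquiv.sumPiEquivProdPi ℤ _ _
      fun k => ZMod (Sum.elim 0 (fun i => p i ^ e i) k)).toAddEquiv.symm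

section
variable {H : Type*} [AddCommGroup H] {ι : Type*} [LinearOrder ι] {n : ℕ}

lemma gcd_nsmul_ιMulti_family_eq_zero {e : ι → H} {q : ι → ℕ} (hq : ∀ i, q i • e i = 0)
    (s : Set.powersetCard ι n) : s.val.gcd q • ιMulti_family ℤ n e s = 0 := by
  rw [← addOrderOf_dvd_iff_nsmul_eq_zero, Finset.dvd_gcd_iff]
  intro i hi
  obtain ⟨a, rfl⟩ := (mem_range_ofFinEmbEquiv_symm_iff_mem s i).mpr hi
  set f := ofFinEmbEquiv.symm s
  rw [addOrderOf_dvd_iff_nsmul_eq_zero, ιMulti_family, ← natCast_zsmul,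
    ← Function.update_eq_self a (e ∘ f), ← AlternatingMap.map_update_smul, Function.comp_apply,
    natCast_zsmul, hq, AlternatingMap.map_update_zero]

variable {m : ℕ}

def IsDetPairing (P : ⋀[ℤ]^n (H →+ ZMod m) →ₗ[ℤ] ⋀[ℤ]^n H →ₗ[ℤ] ZMod m) : Prop :=
  ∀ (y : Fin n → H →+ ZMod m) (x : Fin n → H),
    P (ιMulti ℤ n y) (ιMulti ℤ n x) = (Matrix.of fun a b => y a (x b)).det

variable {P : ⋀[ℤ]^n (H →+ ZMod m) →ₗ[ℤ] ⋀[ℤ]^n H →ₗ[ℤ] ZMod m}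

lemma pairing_ιMulti_family (hP : IsDetPairing P) (e : ι → H) {s₀ : Set.powersetCard ι n}
    {y : Fin n → H →+ ZMod m}
    (hy : ∀ a i, y a (e i) = if i = ofFinEmbEquiv.symm s₀ a then 1 else 0)
    (s : Set.powersetCard ι n) :
    P (ιMulti ℤ n y) (ιMulti_family ℤ n e s) = if s = s₀ then 1 else 0 := by
  rw [ιMulti_family, hP]
  simp only [Function.comp_apply, hy]
  split_ifs with h
  · subst h
    convert Matrix.det_one (n := Fin n) (R := ZMod m)
    ext a b
    simp [Matrix.one_apply, eq_comm]
  · obtain ⟨i, his, hi⟩ := (exists_mem_notMem_iff_ne s s₀).mp h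
    obtain ⟨b, rfl⟩ := (mem_range_ofFinEmbEquiv_symm_iff_mem s i).mpr his
    refine Matrix.det_eq_zero_of_column_eq_zero b fun a => ?_
    rw [Matrix.of_apply, if_neg]
    rintro heq
    exact hi ((mem_range_ofFinEmbEquiv_symm_iff_mem s₀ _).mp ⟨a, heq.symm⟩)

lemma intCast_coeff_eq_zero_of_pairing_eq_zero (hP : IsDetPairing P) (e : ι → H)
    (c : Set.powersetCard ι n →₀ ℤ)
    {s₀ : Set.powersetCard ι n} {y : Fin n → H →+ ZMod m}
    (hy : ∀ a i, y a (e i) = if i = ofFinEmbEquiv.symm s₀ a then 1 else 0)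
    (hX : P (ιMulti ℤ n y) (c.sum fun s a => a • ιMulti_family ℤ n e s) = 0) :
    (c s₀ : ZMod m) = 0 := by
  simp only [Finsupp.sum, map_sum, map_zsmul, pairing_ιMulti_family hP e hy, smul_ite, zsmul_one,
    smul_zero, Finset.sum_ite_eq', Finsupp.mem_support_iff] at hX
  by_cases h : c s₀ = 0
  · rw [h, Int.cast_zero]
  · rwa [if_pos h] at hX

theorem eq_zero_of_forall_pairing_eq_zero {e : ι → H} {q : ι → ℕ}
    (hspan : Submodule.span ℤ (Set.range e) = ⊤) (hq : ∀ i, q i • e i = 0)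
    (hdual : ∀ (m : ℕ) (i : ι), m ∣ q i →
      ∃ τ : H →+ ZMod m, ∀ j, τ (e j) = if j = i then 1 else 0)
    (P : ∀ m : ℕ, 0 < m → ⋀[ℤ]^n (H →+ ZMod m) →ₗ[ℤ] ⋀[ℤ]^n H →ₗ[ℤ] ZMod m)
    (hP : ∀ (m : ℕ) (hm : 0 < m), IsDetPairing (P m hm))
    {X : ⋀[ℤ]^n H} (hX : ∀ (m : ℕ) (hm : 0 < m) (w : ⋀[ℤ]^n (H →+ ZMod m)), P m hm w X = 0) :
    X = 0 := by
  have hXspan : X ∈ Submodule.span ℤ (Set.range (ιMulti_family ℤ n e)) := by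
    rw [ιMulti_family_span_of_span ℤ hspan]; trivial
  obtain ⟨c, rfl⟩ := Finsupp.mem_span_range_iff_exists_finsupp.mp hXspan
  refine Finset.sum_eq_zero fun s _ => ?_
  refine zsmul_eq_zero_of_forall_intCast_eq_zero (gcd_nsmul_ιMulti_family_eq_zero hq s) ?_
  intro m hm hdvd
  have hdvd_q (a : Fin n) : m ∣ q (ofFinEmbEquiv.symm s a) :=
    Finset.dvd_gcd_iff.mp hdvd _ ((mem_range_ofFinEmbEquiv_symm_iff_mem s _).mp ⟨a, rfl⟩)
  choose τ hτ using fun a => hdual m _ (hdvd_q a)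
  exact intCast_coeff_eq_zero_of_pairing_eq_zero (hP m hm) e c hτ (hX m hm _)

end

section
variable {H : Type*} [AddCommGroup H] {ι : Type*} [DecidableEq ι] {q : ι → ℕ}
  (φ : H ≃+ ((i : ι) → ZMod (q i)))

lemma span_range_symm_single [Fintype ι] :
    Submodule.span ℤ (Set.range fun i => φ.symm (Pi.single i 1)) = ⊤ := by
  refine eq_top_iff.mpr fun x _ => (Submodule.mem_span_range_iff_exists_fun ℤ).mpr
    ⟨fun i => (φ x i).cast, φ.injective ?_⟩
  ext i
  simp only [map_sum, map_zsmul, AddEquiv.apply_symm_apply, Finset.sum_apply, Pi.smul_apply]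
  rw [Finset.sum_eq_single i (fun j _ hj => by rw [Pi.single_eq_of_ne' hj, smul_zero]) (by simp),
    Pi.single_eq_same, zsmul_one, ZMod.intCast_zmod_cast]

lemma nsmul_symm_single_eq_zero (i : ι) : q i • φ.symm (Pi.single i 1) = 0 := by
  rw [← map_nsmul, ← Pi.single_smul, nsmul_eq_mul, mul_one, ZMod.natCast_self, Pi.single_zero,
    map_zero]

lemma exists_addMonoidHom_apply_symm_single {m : ℕ} {i : ι} (hm : m ∣ q i) :
    ∃ τ : H →+ ZMod m, ∀ j, τ (φ.symm (Pi.single j 1)) = if j = i then 1 else 0 :=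
  ⟨(ZMod.castHom hm (ZMod m)).toAddMonoidHom.comp
    ((Pi.evalAddMonoidHom (fun i => ZMod (q i)) i).comp φ.toAddMonoidHom), fun j => by
    by_cases h : j = i
    · subst h; simp [ZMod.cast_one hm]
    · simp [h, Ne.symm h]⟩

end

lemma isDetPairing_of_wedge3 {H : Type*} [AddCommGroup H] {m : ℕ}
    {P : ⋀[ℤ]^3 (H →+ ZMod m) →ₗ[ℤ] ⋀[ℤ]^3 H →ₗ[ℤ] ZMod m}
    (hP : ∀ (y₁ y₂ y₃ : H →+ ZMod m) (x₁ x₂ x₃ : H),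
      P (wedge3 y₁ y₂ y₃) (wedge3 x₁ x₂ x₃) =
        ∑ σ : Equiv.Perm (Fin 3), ((Equiv.Perm.sign σ : ℤ) : ZMod m) *
          ∏ i : Fin 3, ![y₁, y₂, y₃] (σ i) (![x₁, x₂, x₃] i)) :
    IsDetPairing P := by
  intro y x
  have hy : y = ![y 0, y 1, y 2] := by ext a; fin_cases a <;> rfl
  have hx : x = ![x 0, x 1, x 2] := by ext a; fin_cases a <;> rfl
  rw [hy, hx, ← wedge3_eq_ιMulti, ← wedge3_eq_ιMulti, hP, Matrix.det_apply']
  rfl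

theorem stmt1_general (H : Type*) [AddCommGroup H] (hFG : AddGroup.FG H)
    (pairing : ∀ m : ℕ, 0 < m → (⋀[ℤ]^3 (H →+ ZMod m)) →ₗ[ℤ] (⋀[ℤ]^3 H) →ₗ[ℤ] ZMod m)
    (hpair : ∀ (m : ℕ) (hm : 0 < m) (y₁ y₂ y₃ : H →+ ZMod m) (x₁ x₂ x₃ : H),
      pairing m hm (wedge3 y₁ y₂ y₃) (wedge3 x₁ x₂ x₃) =
        ∑ σ : Equiv.Perm (Fin 3), ((Equiv.Perm.sign σ : ℤ) : ZMod m) *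
          ∏ i : Fin 3, ![y₁, y₂, y₃] (σ i) (![x₁, x₂, x₃] i))
    (X : ⋀[ℤ]^3 H)
    (hX : ∀ (m : ℕ) (hm : 0 < m) (w : ⋀[ℤ]^3 (H →+ ZMod m)), pairing m hm w X = 0)
    (n : ℕ) (p : ℕ) :
    (X ⊗ₜ[ℤ] (1 : ZMod (n * p)) : (⋀[ℤ]^3 H) ⊗[ℤ] ZMod (n * p)) = 0 := by
  obtain ⟨ι, _, q, ⟨φ⟩⟩ := AddCommGroup.exists_addEquiv_pi_zmod H
  let _ : LinearOrder ι := LinearOrder.lift' _ (Fintype.equivFin ι).injective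
  have hX0 : X = 0 := eq_zero_of_forall_pairing_eq_zero (span_range_symm_single φ)
    (nsmul_symm_single_eq_zero φ) (fun _ _ hm => exists_addMonoidHom_apply_symm_single φ hm)
    pairing (fun m hm => isDetPairing_of_wedge3 (hpair m hm)) hX
  rw [hX0, TensorProduct.zero_tmul]

/-- Let `H` be a finitely generated abelian group and let `X ∈ Λ³H` satisfy
`⟨w, X⟩⁽ᵐ⁾ = 0` for every integer `m > 0` and every `w ∈ Λ³(H⁽ᵐ⁾)`. Let `n ≥ 1` be an
integer and `p` a prime number. If the image of `X` in `(Λ³H) ⊗ ℤ/nℤ` is zero, then the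
image of `X` in `(Λ³H) ⊗ ℤ/npℤ` is also zero. -/
theorem stmt1 (H : Type*) [AddCommGroup H] (hFG : AddGroup.FG H)
    (pairing : ∀ m : ℕ, 0 < m → (⋀[ℤ]^3 (H →+ ZMod m)) →ₗ[ℤ] (⋀[ℤ]^3 H) →ₗ[ℤ] ZMod m)
    (hpair : ∀ (m : ℕ) (hm : 0 < m) (y₁ y₂ y₃ : H →+ ZMod m) (x₁ x₂ x₃ : H),
      pairing m hm (wedge3 y₁ y₂ y₃) (wedge3 x₁ x₂ x₃) =
        ∑ σ : Equiv.Perm (Fin 3), ((Equiv.Perm.sign σ : ℤ) : ZMod m) *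
          ∏ i : Fin 3, ![y₁, y₂, y₃] (σ i) (![x₁, x₂, x₃] i))
    (X : ⋀[ℤ]^3 H)
    (hX : ∀ (m : ℕ) (hm : 0 < m) (w : ⋀[ℤ]^3 (H →+ ZMod m)), pairing m hm w X = 0)
    (n : ℕ) (hn : 1 ≤ n) (p : ℕ) (hp : p.Prime)
    (h : (X ⊗ₜ[ℤ] (1 : ZMod n) : (⋀[ℤ]^3 H) ⊗[ℤ] ZMod n) = 0) :
    (X ⊗ₜ[ℤ] (1 : ZMod (n * p)) : (⋀[ℤ]^3 H) ⊗[ℤ] ZMod (n * p)) = 0 :=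
  stmt1_general H hFG pairing hpair X hX n p
end

section
/- Let H be a finitely generated abelian group and S an affine space over the ℤ/2-vector space H^{(2)} = Hom(H, ℤ/2ℤ). Then there is a well-defined group homomorphism γ : 𝒴(A(S, ℤ/2ℤ), 1̄) → C(S, ℤ/2ℤ) satisfying γ(Y[f₁, f₂, f₃]) = f₁f₂f₃ (pointwise product of functions) for all affine functions f₁, f₂, f₃, and γ is a group isomorphism. -/
section YGroup

/-- The subgroup of relators defining the group `𝒴(A, s)`: cyclic invariance,
multilinearity in the first entry, and the slide relation. -/
def YRel (A : Type*) [AddCommGroup A] (s : A) : AddSubgroup (FreeAbelianGroup (A × A × A)) :=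
  AddSubgroup.closure
    {x | (∃ a₁ a₂ a₃ : A, x = FreeAbelianGroup.of (a₁, a₂, a₃) - FreeAbelianGroup.of (a₂, a₃, a₁))
      ∨ (∃ a₁ a₁' a₂ a₃ : A, x = FreeAbelianGroup.of (a₁ + a₁', a₂, a₃)
          - FreeAbelianGroup.of (a₁, a₂, a₃) - FreeAbelianGroup.of (a₁', a₂, a₃))
      ∨ (∃ a₁ a₂ : A, x = FreeAbelianGroup.of (a₁, a₁, a₂) - FreeAbelianGroup.of (s, a₁, a₂))}

/-- The group `𝒴(A, s)`: the quotient of the free abelian group on `A × A × A` by the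
cyclic invariance, multilinearity and slide relations. -/
abbrev YGroup (A : Type*) [AddCommGroup A] (s : A) : Type _ :=
  FreeAbelianGroup (A × A × A) ⧸ YRel A s

/-- The class `Y[a₁, a₂, a₃]` in `𝒴(A, s)`. -/
def Ysym {A : Type*} [AddCommGroup A] (s : A) (a₁ a₂ a₃ : A) : YGroup A s :=
  QuotientAddGroup.mk (FreeAbelianGroup.of (a₁, a₂, a₃))

end YGroup

section Affine

variable (H : Type*) [AddCommGroup H] (S : Type*) [AddTorsor (H →+ ZMod 2) S]

/-- A function `f : S → ℤ/2ℤ` is affine if there is a homomorphism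
`l : Hom(H, ℤ/2ℤ) → ℤ/2ℤ` (its linear part) with `f(σ + y) = f(σ) + l(y)`. -/
def IsAffineFn (f : S → ZMod 2) : Prop :=
  ∃ l : (H →+ ZMod 2) →+ ZMod 2, ∀ (σ : S) (y : H →+ ZMod 2), f (y +ᵥ σ) = f σ + l y

/-- The abelian group `A(S, ℤ/2ℤ)` of affine functions `S → ℤ/2ℤ` under pointwise addition. -/
def AffineFns : AddSubgroup (S → ZMod 2) where
  carrier := {f | IsAffineFn H S f}
  add_mem' := by
    rintro f g ⟨lf, hf⟩ ⟨lg, hg⟩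
    exact ⟨lf + lg, fun σ y => by
      simp only [Pi.add_apply, AddMonoidHom.add_apply, hf σ y, hg σ y]; abel⟩
  zero_mem' := ⟨0, fun σ y => by simp⟩
  neg_mem' := by
    rintro f ⟨lf, hf⟩
    exact ⟨-lf, fun σ y => by
      simp only [Pi.neg_apply, AddMonoidHom.neg_apply, hf σ y]; abel⟩

/-- The abelian group `C(S, ℤ/2ℤ)` of cubic functions `S → ℤ/2ℤ`, i.e. finite sums of
pointwise products of three affine functions (note that every element of `S → ℤ/2ℤ` is its
own negative, so the subgroup generated by such products consists exactly of the finite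
sums of such products). -/
def CubicFns : AddSubgroup (S → ZMod 2) :=
  AddSubgroup.closure
    {f | ∃ f₁ f₂ f₃ : S → ZMod 2,
      IsAffineFn H S f₁ ∧ IsAffineFn H S f₂ ∧ IsAffineFn H S f₃ ∧ f = f₁ * f₂ * f₃}

/-- The constant function `1̄`, as an element of `A(S, ℤ/2ℤ)`. -/
def oneAff : AffineFns H S :=
  ⟨fun _ => 1, ⟨0, fun σ y => by simp⟩⟩

end Affine

/-!
The relations defining `𝒴(A(S, ℤ/2ℤ), 1̄)` hold for pointwise products of affine functions (the
slide relation because `f * f = f` over `ℤ/2ℤ`), so `γ` is well defined, and it is surjective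
since cubic functions are by definition generated by such products.

For injectivity we build a left inverse `δ`. Fix an origin `σ₀ ∈ S` and a basis `b` of `H⁽²⁾`; the
coordinates `xᵢ` together with `1̄` generate `A(S, ℤ/2ℤ)`. The Möbius sums
`ε_T(g) = ∑_{U ⊆ T} g(σ₀ + ∑_{i ∈ U} bᵢ)` are additive in `g` and pick out monomials:
`ε_T(x_{T'}) = [T = T']` for `x_{T'} = ∏_{i ∈ T'} xᵢ`. Put `δ(g) = ∑_T ε_T(g) Y_T`, where `Y_T` is
`Y[…]` of the increasingly sorted `T` padded with `1̄` in front (and `0` if `|T| > 3`). By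
trilinearity, `δ(f₁f₂f₃) = Y[f₁, f₂, f₃]` only has to be checked on the generators `1̄, xᵢ`; there
the symmetry of `Y` (a consequence of the slide relation, as `A(S, ℤ/2ℤ)` has exponent 2) and the
slide relation reduce every triple to a sorted one without repeated coordinates, i.e. to
`δ(x_T) = Y_T`.
-/

lemma Pi.zmodTwo_mul_self {α : Type*} (f : α → ZMod 2) : f * f = f := by
  ext x
  rw [Pi.mul_apply]
  generalize f x = c
  fin_cases c <;> rfl

def zmodTwoHom {G : Type*} [AddCommGroup G] (y : G) (hy : y + y = 0) : ZMod 2 →+ G :=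
  ZMod.lift 2 ⟨zmultiplesHom G y, by simpa [two_zsmul] using hy⟩

lemma zmodTwoHom_one {G : Type*} [AddCommGroup G] (y : G) (hy : y + y = 0) :
    zmodTwoHom y hy 1 = y := by
  rw [zmodTwoHom, ← Int.cast_one, ZMod.lift_coe]
  simp

lemma Finset.sort_pair {ι : Type*} [LinearOrder ι] {j k : ι} (h : j < k) :
    ({j, k} : Finset ι).sort = [j, k] := by
  simpa using (List.toFinset_sort (· ≤ ·) (l := [j, k]) (by simp [h.ne])).2 (by simp [h.le])

lemma Finset.sort_triple {ι : Type*} [LinearOrder ι] {i j k : ι} (hij : i < j) (hjk : j < k) :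
    ({i, j, k} : Finset ι).sort = [i, j, k] := by
  simpa using (List.toFinset_sort (· ≤ ·) (l := [i, j, k])
    (by simp [hij.ne, hjk.ne, (hij.trans hjk).ne])).2
    (by simp [hij.le, hjk.le, (hij.trans hjk).le])

lemma eq_of_map_add_of_closure_eq_top {A G : Type*} [AddGroup A] [AddGroup G] {s : Set A}
    (hs : AddSubgroup.closure s = ⊤) {φ ψ : A → G} (hφ : ∀ x y, φ (x + y) = φ x + φ y)
    (hψ : ∀ x y, ψ (x + y) = ψ x + ψ y) (h : ∀ x ∈ s, φ x = ψ x) (x : A) : φ x = ψ x :=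
  DFunLike.congr_fun (AddMonoidHom.eq_of_eqOn_dense hs (f := .mk' φ hφ) (g := .mk' ψ hψ) h) x

lemma AddMonoidHom.finite_of_fg {H G : Type*} [AddGroup H] [AddGroup G] [Finite G]
    (hH : AddGroup.FG H) : Finite (H →+ G) := by
  obtain ⟨s, hs, hfin⟩ := AddGroup.fg_iff.mp hH
  have := hfin.to_subtype
  refine Finite.of_injective (fun φ : H →+ G => fun x : s => φ x) fun φ ψ h => ?_
  exact AddMonoidHom.eq_of_eqOn_dense hs fun x hx => congrFun h ⟨x, hx⟩

lemma WithBot.forall₃_of_perm_of_slide {ι : Type*} [LinearOrder ι]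
    {Q : WithBot ι → WithBot ι → WithBot ι → Prop}
    (swap : ∀ a b c, Q a b c → Q b a c) (cycle : ∀ a b c, Q a b c → Q b c a)
    (slide : ∀ a c, Q ⊥ a c → Q a a c)
    (h₀ : Q ⊥ ⊥ ⊥) (h₁ : ∀ k : ι, Q ⊥ ⊥ k) (h₂ : ∀ j k : ι, j < k → Q ⊥ j k)
    (h₃ : ∀ i j k : ι, i < j → j < k → Q i j k) : ∀ a b c, Q a b c := by
  have bot_bot : ∀ c, Q ⊥ ⊥ c := fun c => by induction c <;> simp_all
  have bot_lt : ∀ b c : WithBot ι, b < c → Q ⊥ b c := by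
    intro b c hbc
    induction b <;> induction c <;> simp_all
  have lt_lt : ∀ a b c : WithBot ι, a < b → b < c → Q a b c := by
    intro a b c hab hbc
    induction a <;> induction b <;> induction c <;> simp_all
  have sorted : ∀ a b c : WithBot ι, a ≤ b → b ≤ c → Q a b c := by
    intro a b c hab hbc
    rcases hab.lt_or_eq with hab | rfl
    · rcases hbc.lt_or_eq with hbc | rfl
      · exact lt_lt a b c hab hbc
      · exact cycle _ _ _ (cycle _ _ _ (slide _ _ (cycle _ _ _ (swap _ _ _ (bot_lt a b hab)))))
    · refine slide _ _ ?_
      rcases hbc.lt_or_eq with hbc | rfl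
      · exact bot_lt a c hbc
      · exact cycle _ _ _ (cycle _ _ _ (slide _ _ (cycle _ _ _ (bot_bot a))))
  intro a b c
  rcases le_total a b with hab | hba <;> rcases le_total b c with hbc | hcb <;>
    rcases le_total a c with hac | hca
  all_goals first
    | exact sorted a b c hab hbc
    | exact cycle _ _ _ (swap _ _ _ (sorted a c b ‹_› ‹_›))
    | exact swap _ _ _ (sorted b a c ‹_› ‹_›)
    | exact cycle _ _ _ (cycle _ _ _ (sorted b c a ‹_› ‹_›))
    | exact cycle _ _ _ (sorted c a b ‹_› ‹_›)
    | exact swap _ _ _ (cycle _ _ _ (sorted c b a ‹_› ‹_›))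

section YGroup

variable {A : Type*} [AddCommGroup A] {s : A}

lemma Ysym_cycle (a₁ a₂ a₃ : A) : Ysym s a₁ a₂ a₃ = Ysym s a₂ a₃ a₁ :=
  (QuotientAddGroup.eq_iff_sub_mem).2 <|
    AddSubgroup.subset_closure (Or.inl ⟨a₁, a₂, a₃, rfl⟩)

lemma Ysym_add_left (a₁ a₁' a₂ a₃ : A) :
    Ysym s (a₁ + a₁') a₂ a₃ = Ysym s a₁ a₂ a₃ + Ysym s a₁' a₂ a₃ :=
  (QuotientAddGroup.eq_iff_sub_mem).2 <| by
    rw [← sub_sub]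
    exact AddSubgroup.subset_closure (Or.inr (Or.inl ⟨a₁, a₁', a₂, a₃, rfl⟩))

lemma Ysym_slide (a₁ a₂ : A) : Ysym s a₁ a₁ a₂ = Ysym s s a₁ a₂ :=
  (QuotientAddGroup.eq_iff_sub_mem).2 <|
    AddSubgroup.subset_closure (Or.inr (Or.inr ⟨a₁, a₂, rfl⟩))

lemma Ysym_add_middle (a₁ a₂ a₂' a₃ : A) :
    Ysym s a₁ (a₂ + a₂') a₃ = Ysym s a₁ a₂ a₃ + Ysym s a₁ a₂' a₃ := by
  simp only [Ysym_cycle a₁, Ysym_add_left]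

lemma Ysym_add_right (a₁ a₂ a₃ a₃' : A) :
    Ysym s a₁ a₂ (a₃ + a₃') = Ysym s a₁ a₂ a₃ + Ysym s a₁ a₂ a₃' := by
  simp only [Ysym_cycle a₁ a₂, Ysym_cycle a₂, Ysym_add_left]

lemma Ysym_zero_left (a₂ a₃ : A) : Ysym s 0 a₂ a₃ = 0 := by
  simpa using Ysym_add_left (s := s) 0 0 a₂ a₃

lemma YGroup.hom_ext {G : Type*} [AddCommGroup G] {φ ψ : YGroup A s →+ G}
    (h : ∀ a₁ a₂ a₃, φ (Ysym s a₁ a₂ a₃) = ψ (Ysym s a₁ a₂ a₃)) : φ = ψ :=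
  QuotientAddGroup.addMonoidHom_ext _ <| FreeAbelianGroup.lift_ext _ _ fun _ => h _ _ _

lemma Ysym_add_self (h2 : ∀ a : A, a + a = 0) (a₁ a₂ a₃ : A) :
    Ysym s a₁ a₂ a₃ + Ysym s a₁ a₂ a₃ = 0 := by
  rw [← Ysym_add_left, h2, Ysym_zero_left]

lemma YGroup.add_self (h2 : ∀ a : A, a + a = 0) (y : YGroup A s) : y + y = 0 := by
  have : (2 • AddMonoidHom.id _ : YGroup A s →+ YGroup A s) = 0 :=
    YGroup.hom_ext fun a₁ a₂ a₃ => by simpa [two_nsmul] using Ysym_add_self h2 a₁ a₂ a₃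
  simpa [two_nsmul] using DFunLike.congr_fun this y

lemma Ysym_swap (h2 : ∀ a : A, a + a = 0) (a₁ a₂ a₃ : A) :
    Ysym s a₁ a₂ a₃ = Ysym s a₂ a₁ a₃ := by
  have h := Ysym_slide (s := s) (a₁ + a₂) a₃
  rw [Ysym_add_left, Ysym_add_middle, Ysym_add_middle, Ysym_add_middle, Ysym_slide,
    Ysym_slide] at h
  have h' : Ysym s a₁ a₂ a₃ + Ysym s a₂ a₁ a₃ = 0 := by
    rw [← sub_eq_zero.mpr h]
    abel
  rw [eq_neg_of_add_eq_zero_left h', neg_eq_of_add_eq_zero_left (Ysym_add_self h2 a₂ a₁ a₃)]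

end YGroup

section CubicProduct

variable {H : Type*} [AddCommGroup H] {S : Type*} [AddTorsor (H →+ ZMod 2) S]

lemma AffineFns.add_self (f : AffineFns H S) : f + f = 0 :=
  Subtype.ext <| funext fun _ => CharTwo.add_self_eq_zero _

lemma coe_oneAff : (oneAff H S : S → ZMod 2) = 1 := rfl

def cubicProduct : YGroup (AffineFns H S) (oneAff H S) →+ CubicFns H S :=
  QuotientAddGroup.lift _
    (FreeAbelianGroup.lift fun f => ⟨f.1 * f.2.1 * f.2.2,
      AddSubgroup.subset_closure ⟨f.1, f.2.1, f.2.2, f.1.2, f.2.1.2, f.2.2.2, rfl⟩⟩) <| by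
    rw [YRel, AddSubgroup.closure_le]
    rintro _ (⟨f₁, f₂, f₃, rfl⟩ | ⟨f₁, f₁', f₂, f₃, rfl⟩ | ⟨f₁, f₂, rfl⟩) <;>
      simp only [SetLike.mem_coe, AddMonoidHom.mem_ker, map_sub, FreeAbelianGroup.lift_apply_of,
        sub_eq_zero, sub_sub, map_add] <;> ext1 <;>
      simp only [AddSubgroup.coe_add, Pi.zmodTwo_mul_self, coe_oneAff, one_mul] <;> ring

lemma coe_cubicProduct_Ysym (f₁ f₂ f₃ : AffineFns H S) :
    (cubicProduct (Ysym (oneAff H S) f₁ f₂ f₃) : S → ZMod 2) = f₁ * f₂ * f₃ := by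
  rw [Ysym, cubicProduct, QuotientAddGroup.lift_mk, FreeAbelianGroup.lift_apply_of]

lemma cubicProduct_surjective : Function.Surjective (cubicProduct (H := H) (S := S)) := by
  intro c
  obtain ⟨y, hy⟩ : (c : S → ZMod 2) ∈ ((CubicFns H S).subtype.comp cubicProduct).range := by
    refine (AddSubgroup.closure_le _).2 ?_ c.2
    rintro _ ⟨f₁, f₂, f₃, h₁, h₂, h₃, rfl⟩
    exact ⟨Ysym _ ⟨f₁, h₁⟩ ⟨f₂, h₂⟩ ⟨f₃, h₃⟩, coe_cubicProduct_Ysym _ _ _⟩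
  exact ⟨y, Subtype.ext hy⟩

end CubicProduct

noncomputable section Coordinates

variable {H : Type*} [AddCommGroup H] {S : Type*} [AddTorsor (H →+ ZMod 2) S]
variable {ι : Type*} (b : Module.Basis ι (ZMod 2) (H →+ ZMod 2)) (σ₀ : S)

def coordFn (i : ι) : AffineFns H S :=
  ⟨fun σ => b.repr (σ -ᵥ σ₀) i,
    ⟨((Finsupp.lapply i).comp b.repr.toLinearMap).toAddMonoidHom, fun σ y => by
      simp [vadd_vsub_assoc, add_comm]⟩⟩

def affineGen : WithBot ι → AffineFns H S
  | ⊥ => oneAff H S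
  | (i : ι) => coordFn b σ₀ i

lemma coe_affineGen_bot : (affineGen b σ₀ ⊥ : S → ZMod 2) = 1 := rfl

lemma coe_affineGen_coe (i : ι) : (affineGen b σ₀ i : S → ZMod 2) = coordFn b σ₀ i := rfl

lemma AffineFns.eq_add_sum_coordFn [Fintype ι] (f : AffineFns H S)
    {l : (H →+ ZMod 2) →+ ZMod 2}
    (hl : ∀ (σ : S) (y : H →+ ZMod 2), (f : S → ZMod 2) (y +ᵥ σ) = (f : S → ZMod 2) σ + l y) :
    f = ((f : S → ZMod 2) σ₀).val • oneAff H S + ∑ i, (l (b i)).val • coordFn b σ₀ i := by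
  ext σ
  have hlin (v : H →+ ZMod 2) : l v = ∑ i, b.repr v i * l (b i) := by
    conv_lhs => rw [← b.sum_repr v]
    simp only [map_sum, ZMod.map_smul, smul_eq_mul]
  rw [← vsub_vadd σ σ₀, hl, hlin]
  simp only [AddSubgroup.coe_add, AddSubgroup.val_finsetSum, AddSubgroup.coe_nsmul, Pi.add_apply,
    Finset.sum_apply, Pi.smul_apply]
  simp [nsmul_eq_mul, oneAff, coordFn, mul_comm]

lemma closure_range_affineGen [Fintype ι] :
    AddSubgroup.closure (Set.range (affineGen b σ₀)) = ⊤ := by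
  refine eq_top_iff.2 fun f _ => ?_
  obtain ⟨l, hl⟩ := f.2
  rw [AffineFns.eq_add_sum_coordFn b σ₀ f hl]
  have mem (a : WithBot ι) : affineGen b σ₀ a ∈ AddSubgroup.closure (Set.range (affineGen b σ₀)) :=
    AddSubgroup.subset_closure (Set.mem_range_self a)
  exact add_mem (nsmul_mem (mem ⊥) _) (sum_mem fun i _ => nsmul_mem (mem i) _)

variable [DecidableEq ι]

def basisPoint (U : Finset ι) : S := (∑ i ∈ U, b i) +ᵥ σ₀

lemma coordFn_basisPoint (i : ι) (U : Finset ι) :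
    (coordFn b σ₀ i : S → ZMod 2) (basisPoint b σ₀ U) = if i ∈ U then 1 else 0 := by
  simp [coordFn, basisPoint, Finsupp.single_apply]

def monomial (T : Finset ι) : S → ZMod 2 := ∏ i ∈ T, (coordFn b σ₀ i : S → ZMod 2)

lemma monomial_basisPoint (T U : Finset ι) :
    monomial b σ₀ T (basisPoint b σ₀ U) = if T ⊆ U then 1 else 0 := by
  simp only [monomial, Finset.prod_apply, coordFn_basisPoint, Finset.prod_boole]
  rfl

def mobiusCoeff (T : Finset ι) : (S → ZMod 2) →+ ZMod 2 :=
  ∑ U ∈ T.powerset, Pi.evalAddMonoidHom (fun _ : S => ZMod 2) (basisPoint b σ₀ U)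

lemma mobiusCoeff_monomial (T T' : Finset ι) :
    mobiusCoeff b σ₀ T (monomial b σ₀ T') = if T' = T then 1 else 0 := by
  simp only [mobiusCoeff, AddMonoidHom.finsetSum_apply, Pi.evalAddMonoidHom_apply,
    monomial_basisPoint, Finset.sum_boole, ← Finset.Icc_eq_filter_powerset]
  by_cases hT : T' ⊆ T
  · rw [Finset.card_Icc_finset hT]
    rcases hT.eq_or_ssubset with rfl | hlt
    · simp
    · rw [if_neg hlt.ne, Nat.cast_pow, ZMod.natCast_self,
        zero_pow (Nat.sub_pos_of_lt (Finset.card_lt_card hlt)).ne']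
  · simp [Finset.Icc_eq_empty, hT, show T' ≠ T by rintro rfl; exact hT le_rfl]

end Coordinates

noncomputable section Inverse

variable {H : Type*} [AddCommGroup H] {S : Type*} [AddTorsor (H →+ ZMod 2) S]
variable {ι : Type*} [LinearOrder ι] (b : Module.Basis ι (ZMod 2) (H →+ ZMod 2)) (σ₀ : S)

def yMonomial (T : Finset ι) : YGroup (AffineFns H S) (oneAff H S) :=
  match T.sort with
  | [] => Ysym _ (affineGen b σ₀ ⊥) (affineGen b σ₀ ⊥) (affineGen b σ₀ ⊥)
  | [k] => Ysym _ (affineGen b σ₀ ⊥) (affineGen b σ₀ ⊥) (affineGen b σ₀ k)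
  | [j, k] => Ysym _ (affineGen b σ₀ ⊥) (affineGen b σ₀ j) (affineGen b σ₀ k)
  | [i, j, k] => Ysym _ (affineGen b σ₀ i) (affineGen b σ₀ j) (affineGen b σ₀ k)
  | _ => 0

variable [Fintype ι]

def cubicInv : (S → ZMod 2) →+ YGroup (AffineFns H S) (oneAff H S) :=
  ∑ T, (zmodTwoHom (yMonomial b σ₀ T) (YGroup.add_self AffineFns.add_self _)).comp
    (mobiusCoeff b σ₀ T)

lemma cubicInv_monomial (T : Finset ι) : cubicInv b σ₀ (monomial b σ₀ T) = yMonomial b σ₀ T := by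
  simp [cubicInv, mobiusCoeff_monomial, apply_ite, zmodTwoHom_one]

lemma cubicInv_affineGen (a₁ a₂ a₃ : WithBot ι) :
    cubicInv b σ₀ (affineGen b σ₀ a₁ * affineGen b σ₀ a₂ * affineGen b σ₀ a₃ : S → ZMod 2) =
      Ysym _ (affineGen b σ₀ a₁) (affineGen b σ₀ a₂) (affineGen b σ₀ a₃) := by
  revert a₁ a₂ a₃
  refine WithBot.forall₃_of_perm_of_slide ?_ ?_ ?_ ?_ ?_ ?_ ?_
  · intro a₁ a₂ a₃ h
    rw [Ysym_swap AffineFns.add_self, ← h, mul_comm (affineGen b σ₀ a₂ : S → ZMod 2)]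
  · intro a₁ a₂ a₃ h
    rw [← Ysym_cycle, ← h, mul_comm, mul_assoc]
  · intro a₁ a₃ h
    rw [Pi.zmodTwo_mul_self, Ysym_slide, ← one_mul (affineGen b σ₀ a₁ : S → ZMod 2),
      ← coe_affineGen_bot b σ₀]
    exact h
  · have hm : monomial b σ₀ (∅ : Finset ι) = 1 * 1 * 1 := by simp [monomial]
    rw [coe_affineGen_bot, ← hm, cubicInv_monomial, yMonomial, Finset.sort_empty]
  · intro k
    have hm : monomial b σ₀ {k} = 1 * 1 * coordFn b σ₀ k := by simp [monomial]
    rw [coe_affineGen_bot, coe_affineGen_coe, ← hm, cubicInv_monomial, yMonomial,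
      Finset.sort_singleton]
  · intro j k hjk
    have hm : monomial b σ₀ {j, k} = 1 * coordFn b σ₀ j * coordFn b σ₀ k := by
      simp [monomial, Finset.prod_pair hjk.ne]
    rw [coe_affineGen_bot, coe_affineGen_coe, coe_affineGen_coe, ← hm, cubicInv_monomial,
      yMonomial, Finset.sort_pair hjk]
  · intro i j k hij hjk
    have hm : monomial b σ₀ {i, j, k} = coordFn b σ₀ i * coordFn b σ₀ j * coordFn b σ₀ k := by
      rw [monomial, Finset.prod_insert (by simp [hij.ne, (hij.trans hjk).ne]),
        Finset.prod_pair hjk.ne, mul_assoc]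
    rw [coe_affineGen_coe, coe_affineGen_coe, coe_affineGen_coe, ← hm, cubicInv_monomial,
      yMonomial, Finset.sort_triple hij hjk]

lemma cubicInv_mul_mul (f₁ f₂ f₃ : AffineFns H S) :
    cubicInv b σ₀ (f₁ * f₂ * f₃ : S → ZMod 2) = Ysym _ f₁ f₂ f₃ := by
  have hgen := closure_range_affineGen b σ₀
  have h₃ (a₁ a₂ : WithBot ι) (f₃ : AffineFns H S) :
      cubicInv b σ₀ (affineGen b σ₀ a₁ * affineGen b σ₀ a₂ * f₃ : S → ZMod 2) =
        Ysym _ (affineGen b σ₀ a₁) (affineGen b σ₀ a₂) f₃ :=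
    eq_of_map_add_of_closure_eq_top hgen
      (φ := fun f₃ => cubicInv b σ₀ (affineGen b σ₀ a₁ * affineGen b σ₀ a₂ * f₃ : S → ZMod 2))
      (ψ := Ysym _ (affineGen b σ₀ a₁) (affineGen b σ₀ a₂))
      (fun _ _ => by simp only [AddSubgroup.coe_add, mul_add, map_add])
      (fun _ _ => Ysym_add_right _ _ _ _)
      (by rintro _ ⟨a₃, rfl⟩; exact cubicInv_affineGen b σ₀ a₁ a₂ a₃) f₃
  have h₂ (a₁ : WithBot ι) (f₂ f₃ : AffineFns H S) :
      cubicInv b σ₀ (affineGen b σ₀ a₁ * f₂ * f₃ : S → ZMod 2) =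
        Ysym _ (affineGen b σ₀ a₁) f₂ f₃ :=
    eq_of_map_add_of_closure_eq_top hgen
      (φ := fun f₂ => cubicInv b σ₀ (affineGen b σ₀ a₁ * f₂ * f₃ : S → ZMod 2))
      (ψ := fun f₂ => Ysym _ (affineGen b σ₀ a₁) f₂ f₃)
      (fun _ _ => by simp only [AddSubgroup.coe_add, mul_add, add_mul, map_add])
      (fun _ _ => Ysym_add_middle _ _ _ _)
      (by rintro _ ⟨a₂, rfl⟩; exact h₃ a₁ a₂ f₃) f₂
  exact eq_of_map_add_of_closure_eq_top hgen
    (φ := fun f₁ => cubicInv b σ₀ (f₁ * f₂ * f₃ : S → ZMod 2))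
    (ψ := fun f₁ => Ysym _ f₁ f₂ f₃)
    (fun _ _ => by simp only [AddSubgroup.coe_add, add_mul, map_add])
    (fun _ _ => Ysym_add_left _ _ _ _)
    (by rintro _ ⟨a₁, rfl⟩; exact h₂ a₁ f₂ f₃) f₁

lemma cubicInv_cubicProduct (y : YGroup (AffineFns H S) (oneAff H S)) :
    cubicInv b σ₀ (cubicProduct y) = y := by
  have : (cubicInv b σ₀).comp ((CubicFns H S).subtype.comp cubicProduct) = .id _ :=
    YGroup.hom_ext fun f₁ f₂ f₃ => by
      simpa [coe_cubicProduct_Ysym] using cubicInv_mul_mul b σ₀ f₁ f₂ f₃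
  exact DFunLike.congr_fun this y

end Inverse

/-- Let `H` be a finitely generated abelian group and `S` an affine space over
`H⁽²⁾ = Hom(H, ℤ/2ℤ)`. Then there is a well-defined group homomorphism
`γ : 𝒴(A(S, ℤ/2ℤ), 1̄) → C(S, ℤ/2ℤ)` with `γ(Y[f₁, f₂, f₃]) = f₁f₂f₃`, and `γ` is a group
isomorphism. -/
theorem stmt2 (H : Type*) [AddCommGroup H] (hFG : AddGroup.FG H)
    (S : Type*) [AddTorsor (H →+ ZMod 2) S] :
    ∃ γ : YGroup (AffineFns H S) (oneAff H S) →+ CubicFns H S,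
      (∀ f₁ f₂ f₃ : AffineFns H S,
        ((γ (Ysym (oneAff H S) f₁ f₂ f₃) : S → ZMod 2)) =
          (f₁ : S → ZMod 2) * (f₂ : S → ZMod 2) * (f₃ : S → ZMod 2)) ∧
      Function.Bijective γ := by
  have := AddMonoidHom.finite_of_fg (G := ZMod 2) hFG
  let b := Module.finBasis (ZMod 2) (H →+ ZMod 2)
  obtain ⟨σ₀⟩ := (inferInstance : Nonempty S)
  refine ⟨cubicProduct, coe_cubicProduct_Ysym, ?_, cubicProduct_surjective⟩
  exact Function.LeftInverse.injective (g := fun c : CubicFns H S => cubicInv b σ₀ c)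
    (cubicInv_cubicProduct b σ₀)
end

section
/- Let H be a finitely generated abelian group with basis {(eᵢ, nᵢ) : i ∈ I}, where I is a linearly ordered finite set. Then {(eᵢ∧eⱼ∧e_k, gcd(nᵢ, nⱼ, n_k)) : i < j < k in I} is a basis of Λ³H; that is, for all i < j < k the element eᵢ∧eⱼ∧e_k ∈ Λ³H has additive order gcd(nᵢ, nⱼ, n_k) (with gcd computed with the convention gcd involving 0 as usual, so that order 0 means infinite order), and Λ³H is the internal direct sum of the cyclic subgroups generated by the elements eᵢ∧eⱼ∧e_k for i < j < k. -/
/-!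
For a sorted triple `t = (i, j, k)` put `gₜ = gcd(nᵢ, nⱼ, nₖ)` and `wₜ = eᵢ ∧ eⱼ ∧ eₖ`. The
coordinate functionals of the basis at `i`, `j`, `k`, reduced modulo `gₜ`, are three linear forms
`H → ℤ/gₜ`; the determinant of their values is alternating, hence a functional `φₜ` on `Λ³H`, and
`φₜ(wₛ) = δₛₜ` because for `s ≠ t` some index of `s` lies outside `t` and gives a zero row.
Multilinearity shows that `gₜ` kills `wₜ`, and the sorted wedges span `Λ³H`. A spanning family
killed by `g` and admitting such a dual family is a cyclic basis: `φₜ` detects both the order of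
`wₜ` and the `t`-th component of any relation.
-/

/-- A family `{(eᵢ, nᵢ)}` is a (cyclic) basis of the abelian group `A` if each `eᵢ` has
additive order `nᵢ` (`nᵢ = 0` meaning infinite order) and `A` is the internal direct sum of
the cyclic subgroups generated by the `eᵢ`. -/
def IsCyclicBasis {A : Type*} [AddCommGroup A] {I : Type*} [Fintype I] [DecidableEq I]
    (e : I → A) (n : I → ℕ) : Prop :=
  (∀ i, addOrderOf (e i) = n i) ∧
    DirectSum.IsInternal (fun i => AddSubgroup.zmultiples (e i))

open DirectSum

lemma zsmul_eq_zero_of_map_zsmul_eq_zero {A : Type*} [AddCommGroup A] {a : A} {g : ℕ}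
    (ha : g • a = 0) {φ : A →+ ZMod g} (hφ : φ a = 1) {k : ℤ} (hk : φ (k • a) = 0) :
    k • a = 0 := by
  rw [map_zsmul, hφ, zsmul_one, ZMod.intCast_zmod_eq_zero_iff_dvd] at hk
  obtain ⟨m, rfl⟩ := hk
  rw [mul_comm, mul_zsmul, natCast_zsmul, ha, zsmul_zero]

section DualFamily

variable {A J : Type*} [AddCommGroup A] [Fintype J] [DecidableEq J] {w : J → A} {g : J → ℕ}
  {φ : ∀ j, A →+ ZMod (g j)}

lemma map_coeAddMonoidHom_of_dual (hφ : ∀ i j, φ i (w j) = if i = j then 1 else 0) (j : J)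
    (y : ⨁ i, AddSubgroup.zmultiples (w i)) :
    φ j (DirectSum.coeAddMonoidHom _ y) = φ j (y j) := by
  conv_lhs => rw [← DirectSum.sum_univ_of y]
  simp only [map_sum, coeAddMonoidHom_of]
  refine Finset.sum_eq_single j (fun i _ hij => ?_) (by simp)
  obtain ⟨k, hk : k • w i = y i⟩ := (y i).2
  rw [← hk, map_zsmul, hφ, if_neg hij.symm, smul_zero]

theorem isCyclicBasis_of_dual (φ : ∀ j, A →+ ZMod (g j))
    (hφ : ∀ i j, φ i (w j) = if i = j then 1 else 0)
    (hspan : Submodule.span ℤ (Set.range w) = ⊤) (htors : ∀ j, g j • w j = 0) :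
    IsCyclicBasis w g := by
  have hφ_self (j : J) : φ j (w j) = 1 := by rw [hφ, if_pos rfl]
  refine ⟨fun j => Nat.dvd_antisymm (addOrderOf_dvd_of_nsmul_eq_zero (htors j)) ?_, ?_, ?_⟩
  · simpa only [hφ_self, ZMod.addOrderOf_one] using addOrderOf_map_dvd (φ j) (w j)
  · refine (injective_iff_map_eq_zero _).mpr fun y hy => DFinsupp.ext fun j => ?_
    obtain ⟨k, hk : k • w j = y j⟩ := (y j).2
    have hyj : φ j (k • w j) = 0 := by
      rw [hk, ← map_coeAddMonoidHom_of_dual hφ, hy, map_zero]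
    exact Subtype.ext (hk ▸ zsmul_eq_zero_of_map_zsmul_eq_zero (htors j) (hφ_self j) hyj)
  · intro x
    change x ∈ AddMonoidHom.range (G := ⨁ j, AddSubgroup.zmultiples (w j))
      (DirectSum.coeAddMonoidHom _)
    have hx : x ∈ (Submodule.span ℤ (Set.range w)).toAddSubgroup := hspan ▸ trivial
    rw [Submodule.span_int_eq_addSubgroupClosure] at hx
    refine (AddSubgroup.closure_le _).mpr ?_ hx
    rintro _ ⟨j, rfl⟩
    exact ⟨DirectSum.of _ j ⟨w j, AddSubgroup.mem_zmultiples _⟩, coeAddMonoidHom_of _ _ _⟩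

end DualFamily

lemma AddSubgroup.mem_zmultiples_subtype_self {A : Type*} [AddCommGroup A] (a : A)
    (x : AddSubgroup.zmultiples a) :
    x ∈ AddSubgroup.zmultiples ⟨a, AddSubgroup.mem_zmultiples a⟩ := by
  obtain ⟨k, hk⟩ := x.2
  exact ⟨k, Subtype.ext hk⟩

namespace IsCyclicBasis

variable {A I : Type*} [AddCommGroup A] [Fintype I] [DecidableEq I] {e : I → A} {n : I → ℕ}

noncomputable def addEquiv (hb : IsCyclicBasis e n) :
    (⨁ i, AddSubgroup.zmultiples (e i)) ≃+ A :=
  AddEquiv.ofBijective (DirectSum.coeAddMonoidHom fun i => AddSubgroup.zmultiples (e i)) hb.2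

lemma addEquiv_symm_apply_self (hb : IsCyclicBasis e n) (j : I) :
    hb.addEquiv.symm (e j) = DirectSum.of _ j ⟨e j, AddSubgroup.mem_zmultiples _⟩ := by
  rw [AddEquiv.symm_apply_eq]
  exact (coeAddMonoidHom_of (fun i => AddSubgroup.zmultiples (e i)) j
    ⟨e j, AddSubgroup.mem_zmultiples _⟩).symm

noncomputable def coord (hb : IsCyclicBasis e n) (i : I) : A →+ ZMod (n i) :=
  (ZMod.castHom (hb.1 i).symm.dvd _).toAddMonoidHom.comp <|
    (zmodAddEquivOfGenerator (AddSubgroup.mem_zmultiples_subtype_self (e i))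
      (Nat.card_zmultiples (e i))).symm.toAddMonoidHom.comp <|
    (DFinsupp.evalAddMonoidHom i).comp hb.addEquiv.symm.toAddMonoidHom

lemma coord_apply (hb : IsCyclicBasis e n) (i j : I) :
    hb.coord i (e j) = if i = j then 1 else 0 := by
  simp only [coord, DFinsupp.evalAddMonoidHom, AddMonoidHom.comp_apply,
    AddEquiv.coe_toAddMonoidHom, addEquiv_symm_apply_self, DFinsupp.coeFnAddMonoidHom_apply,
    Pi.evalAddMonoidHom_apply, RingHom.toAddMonoidHom_eq_coe, AddMonoidHom.coe_coe]
  rcases eq_or_ne i j with rfl | hij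
  · rw [of_eq_same, zmodAddEquivOfGenerator_symm_apply_generator, map_one, if_pos rfl]
  · rw [of_eq_of_ne _ _ _ hij, map_zero, map_zero, if_neg hij]

lemma span_eq_top (hb : IsCyclicBasis e n) : Submodule.span ℤ (Set.range e) = ⊤ := by
  refine eq_top_iff.mpr fun x _ => ?_
  obtain ⟨y, rfl⟩ := hb.2.2 x
  rw [← DirectSum.sum_univ_of y, map_sum]
  refine Submodule.sum_mem _ fun i _ => ?_
  obtain ⟨k, hk⟩ := (y i).2
  rw [coeAddMonoidHom_of, ← hk]
  exact Submodule.smul_mem _ k (Submodule.subset_span ⟨i, rfl⟩)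

end IsCyclicBasis

namespace exteriorPower

variable {R S M : Type*} [CommRing R] [CommRing S] [Algebra R S] [AddCommGroup M] [Module R M]
  {k : ℕ}

noncomputable def detForm (c : Fin k → M →ₗ[R] S) : ⋀[R]^k M →ₗ[R] S :=
  alternatingMapLinearEquiv
    { toMultilinearMap :=
        ((Matrix.detRowAlternating (R := S) (n := Fin k)).toMultilinearMap.restrictScalars R
          ).compLinearMap fun _ => LinearMap.pi c
      map_eq_zero_of_eq' := fun _ _ _ h hij => Matrix.det_zero_of_row_eq hij (by simp [h]) }

lemma detForm_ιMulti (c : Fin k → M →ₗ[R] S) (v : Fin k → M) :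
    detForm c (ιMulti R k v) = (Matrix.of fun i j => c j (v i)).det := by
  rw [detForm, alternatingMapLinearEquiv_apply_ιMulti]
  rfl

variable {ι : Type*} [DecidableEq ι] {x : ι → M} {c : Fin k → M →ₗ[R] S} {a : Fin k → ι}

lemma detForm_ιMulti_comp_self (hc : ∀ r j, c r (x j) = if a r = j then 1 else 0)
    (ha : Function.Injective a) : detForm c (ιMulti R k (x ∘ a)) = 1 := by
  rw [detForm_ιMulti, ← Matrix.det_one (n := Fin k) (R := S)]
  congr 1
  ext i j
  simp [hc, Matrix.one_apply, ha.eq_iff, eq_comm]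

lemma detForm_ιMulti_comp_eq_zero (hc : ∀ r j, c r (x j) = if a r = j then 1 else 0)
    {b : Fin k → ι} {i : Fin k} (hi : b i ∉ Set.range a) :
    detForm c (ιMulti R k (x ∘ b)) = 0 := by
  rw [detForm_ιMulti]
  refine Matrix.det_eq_zero_of_row_eq_zero i fun j => ?_
  simp only [Matrix.of_apply, Function.comp_apply, hc]
  exact if_neg fun h => hi ⟨j, h⟩

end exteriorPower

lemma MultilinearMap.addOrderOf_apply_dvd {R ι M N : Type*} [Semiring R] [AddCommMonoid M]
    [AddCommMonoid N] [Module R M] [Module R N] [DecidableEq ι]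
    (f : MultilinearMap R (fun _ : ι => M) N) (v : ι → M) (i : ι) :
    addOrderOf (f v) ∣ addOrderOf (v i) := by
  refine addOrderOf_dvd_of_nsmul_eq_zero ?_
  have := f.map_update_smul v i (addOrderOf (v i) : R) (v i)
  rwa [Function.update_eq_self, Nat.cast_smul_eq_nsmul, Nat.cast_smul_eq_nsmul,
    addOrderOf_nsmul_eq_zero, f.map_update_zero, eq_comm] at this

lemma StrictMono.eq_of_range_subset {α : Type*} [LinearOrder α] {k : ℕ} {f g : Fin k → α}
    (hf : StrictMono f) (hg : StrictMono g) (h : Set.range f ⊆ Set.range g) : f = g := by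
  refine (hf.range_inj hg).mp (Set.eq_of_subset_of_ncard_le h ?_)
  rw [Set.ncard_range_of_injective hf.injective, Set.ncard_range_of_injective hg.injective]

abbrev SortedTriple (I : Type*) [LinearOrder I] := {t : I × I × I // t.1 < t.2.1 ∧ t.2.1 < t.2.2}

namespace SortedTriple

variable {I : Type*} [LinearOrder I]

def toFun (t : SortedTriple I) : Fin 3 → I := ![t.1.1, t.1.2.1, t.1.2.2]

lemma strictMono_toFun (t : SortedTriple I) : StrictMono t.toFun :=
  Fin.strictMono_iff_lt_succ.mpr fun i => by fin_cases i; exacts [t.2.1, t.2.2]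

lemma toFun_injective : Function.Injective (toFun : SortedTriple I → Fin 3 → I) :=
  fun _ _ h => Subtype.ext <| Prod.ext (congrFun h 0) <| Prod.ext (congrFun h 1) (congrFun h 2)

lemma exists_toFun_eq {a : Fin 3 → I} (ha : StrictMono a) : ∃ t : SortedTriple I, t.toFun = a :=
  ⟨⟨(a 0, a 1, a 2), ha (by decide), ha (by decide)⟩, by funext i; fin_cases i <;> rfl⟩

lemma exists_toFun_notMem_range {s t : SortedTriple I} (h : s ≠ t) :
    ∃ i, s.toFun i ∉ Set.range t.toFun := by
  by_contra! hst
  exact h <| toFun_injective <| s.strictMono_toFun.eq_of_range_subset t.strictMono_toFun <|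
    Set.range_subset_iff.mpr hst

lemma span_ιMulti_eq_top {R M : Type*} [CommRing R] [AddCommGroup M] [Module R M] {e : I → M}
    (he : Submodule.span R (Set.range e) = ⊤) :
    Submodule.span R (Set.range fun t : SortedTriple I => exteriorPower.ιMulti R 3 (e ∘ t.toFun))
      = ⊤ := by
  refine eq_top_iff.mpr <| (exteriorPower.ιMulti_family_span_of_span R he).symm.le.trans <|
    Submodule.span_mono ?_
  rintro _ ⟨s, rfl⟩
  obtain ⟨t, ht⟩ := exists_toFun_eq (Set.powersetCard.ofFinEmbEquiv.symm s).strictMono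
  exact ⟨t, congrArg (exteriorPower.ιMulti R 3 <| e ∘ ·) ht⟩

lemma wedge3_eq_ιMulti {H : Type*} [AddCommGroup H] (e : I → H) (t : SortedTriple I) :
    wedge3 (e t.1.1) (e t.1.2.1) (e t.1.2.2) = exteriorPower.ιMulti ℤ 3 (e ∘ t.toFun) :=
  Subtype.ext <| congrArg (ExteriorAlgebra.ιMulti ℤ 3) <| funext fun i => by fin_cases i <;> rfl

end SortedTriple

open exteriorPower in
theorem IsCyclicBasis.exteriorPower_three {H I : Type*} [AddCommGroup H] [Fintype I] [LinearOrder I]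
    {e : I → H} {n : I → ℕ} (hb : IsCyclicBasis e n) :
    IsCyclicBasis (fun t : SortedTriple I => ιMulti ℤ 3 (e ∘ t.toFun))
      (fun t => Nat.gcd (n t.1.1) (Nat.gcd (n t.1.2.1) (n t.1.2.2))) := by
  set g := fun t : SortedTriple I => Nat.gcd (n t.1.1) (Nat.gcd (n t.1.2.1) (n t.1.2.2))
  have hg (t : SortedTriple I) (r : Fin 3) : g t ∣ n (t.toFun r) := by
    fin_cases r
    exacts [Nat.gcd_dvd_left _ _, (Nat.gcd_dvd_right _ _).trans (Nat.gcd_dvd_left _ _),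
      (Nat.gcd_dvd_right _ _).trans (Nat.gcd_dvd_right _ _)]
  let c (t : SortedTriple I) (r : Fin 3) : H →ₗ[ℤ] ZMod (g t) :=
    ((ZMod.castHom (hg t r) _).toAddMonoidHom.comp (hb.coord (t.toFun r))).toIntLinearMap
  have hc (t : SortedTriple I) (r : Fin 3) (j : I) :
      c t r (e j) = if t.toFun r = j then 1 else 0 := by
    change ZMod.castHom (hg t r) _ (hb.coord _ (e j)) = _
    rw [hb.coord_apply, apply_ite (ZMod.castHom (hg t r) _), map_one, map_zero]
  refine isCyclicBasis_of_dual (fun t => (detForm (c t)).toAddMonoidHom) (fun t s => ?_) ?_ ?_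
  · rcases eq_or_ne t s with rfl | hts
    · rw [if_pos rfl]
      exact detForm_ιMulti_comp_self (hc t) t.strictMono_toFun.injective
    · obtain ⟨i, hi⟩ := SortedTriple.exists_toFun_notMem_range hts.symm
      rw [if_neg hts]
      exact detForm_ιMulti_comp_eq_zero (hc t) hi
  · exact SortedTriple.span_ιMulti_eq_top hb.span_eq_top
  · intro t
    have h (r : Fin 3) : addOrderOf (ιMulti ℤ 3 (e ∘ t.toFun)) ∣ n (t.toFun r) :=
      hb.1 (t.toFun r) ▸ (ιMulti ℤ 3).toMultilinearMap.addOrderOf_apply_dvd _ r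
    exact addOrderOf_dvd_iff_nsmul_eq_zero.mp (Nat.dvd_gcd (h 0) (Nat.dvd_gcd (h 1) (h 2)))

/-- Let `H` be a finitely generated abelian group with basis `{(eᵢ, nᵢ) : i ∈ I}`,
`I` a linearly ordered finite set. Then `{(eᵢ∧eⱼ∧eₖ, gcd(nᵢ, nⱼ, nₖ)) : i < j < k}` is a basis
of `Λ³H`. -/
theorem stmt4 (H : Type*) [AddCommGroup H] (I : Type*) [Fintype I] [LinearOrder I]
    (e : I → H) (n : I → ℕ) (hb : IsCyclicBasis e n) :
    IsCyclicBasis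
      (fun t : {t : I × I × I // t.1 < t.2.1 ∧ t.2.1 < t.2.2} =>
        wedge3 (e t.1.1) (e t.1.2.1) (e t.1.2.2))
      (fun t => Nat.gcd (n t.1.1) (Nat.gcd (n t.1.2.1) (n t.1.2.2))) := by
  simpa only [SortedTriple.wedge3_eq_ιMulti] using hb.exteriorPower_three
end

section
/- Let p be a prime number, let n ≥ 1 and n₁, n₂, n₃ ≥ 0 be integers, and let z be an integer. If gcd(n, n₁, n₂, n₃) divides z, and gcd(np, n₁)·gcd(np, n₂)·gcd(np, n₃) divides z·n²·p², then gcd(np, n₁, n₂, n₃) divides z. -/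
/-!
Put `N = gcd(n₁, n₂, n₃)`, `d = gcd(n, N)` and `G = gcd(np, N)`. Then `G ∣ dp`, so the part of
`G` prime to `p` divides `d`, hence `z`, and it remains to see that the `p`-part `P` of `G`
divides `z`. Since `P ∣ np`, either `P ∣ n`, and then `P ∣ d ∣ z`, or `P` is the full `p`-part
of `np`. In the latter case `P³ ∣ G³`, which divides the product of the `gcd(np, nᵢ)` and hence
`z (np)²`; as `(np)²` contributes only `P²` to the `p`-part, `P ∣ z`.
-/

namespace Nat

theorem Coprime.dvd_of_pow_succ_dvd_mul_pow {a b c z k : ℕ} (hab : Coprime a b) (ha : a ≠ 0)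
    (hc : a * b = c) (h : a ^ (k + 1) ∣ z * c ^ k) : a ∣ z := by
  subst hc
  have h' : a ^ k * a ∣ a ^ k * (z * b ^ k) := by
    rw [← pow_succ]
    convert h using 1
    ring
  exact (hab.pow_right k).dvd_of_dvd_mul_right (Nat.dvd_of_mul_dvd_mul_left (by positivity) h')

theorem ordProj_dvd_of_ordProj_pow_succ_dvd {p c z k : ℕ} (hp : p.Prime)
    (h : ordProj[p] c ^ (k + 1) ∣ z * c ^ k) : ordProj[p] c ∣ z := by
  rcases eq_or_ne c 0 with rfl | hc
  · simp
  exact ((coprime_ordCompl hp hc).pow_left _).dvd_of_pow_succ_dvd_mul_pow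
    (ordProj_pos c p).ne' (ordProj_mul_ordCompl_eq_self c p) h

theorem ordProj_dvd_or_eq_ordProj_mul_prime {p m G : ℕ} (hp : p.Prime) (hm : m ≠ 0)
    (hG : G ∣ m * p) : ordProj[p] G ∣ m ∨ ordProj[p] G = ordProj[p] (m * p) := by
  have hvm : (m * p).factorization p = m.factorization p + 1 := by
    rw [factorization_mul hm hp.ne_zero, Finsupp.add_apply, hp.factorization_self]
  have h := ordProj_dvd_ordProj_of_dvd (mul_ne_zero hm hp.ne_zero) hG p
  rw [pow_dvd_pow_iff_le_right hp.one_lt, hvm] at h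
  rcases h.lt_or_eq with h | h
  · exact .inl ((pow_dvd_pow p (by omega)).trans (ordProj_dvd m p))
  · exact .inr (by rw [h, hvm])

theorem dvd_of_dvd_mul_prime_of_ordProj_dvd {p G d z : ℕ} (hp : p.Prime) (hG : G ∣ d * p)
    (hd : d ∣ z) (hP : ordProj[p] G ∣ z) : G ∣ z := by
  rcases eq_or_ne G 0 with rfl | hG0
  · obtain rfl : d = 0 := by simpa [hp.ne_zero] using hG
    exact hd
  have hcompl : ordCompl[p] G ∣ z := by
    have h := ordCompl_dvd_ordCompl_of_dvd hG p
    rw [ordCompl_mul, show ordCompl[p] p = 1 by simpa using ordCompl_self_pow (k := 1) hp,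
      mul_one] at h
    exact h.trans ((ordCompl_dvd d p).trans hd)
  rw [← ordProj_mul_ordCompl_eq_self G p]
  exact ((coprime_ordCompl hp hG0).pow_left _).mul_dvd_of_dvd_of_dvd hP hcompl

end Nat

/-- Let `p` be a prime number, let `n ≥ 1` and `n₁, n₂, n₃ ≥ 0` be integers,
and let `z` be an integer. If `gcd(n, n₁, n₂, n₃)` divides `z`, and
`gcd(np, n₁)·gcd(np, n₂)·gcd(np, n₃)` divides `z·n²·p²`, then `gcd(np, n₁, n₂, n₃)`
divides `z`. -/
theorem stmt8 (p : ℕ) (hp : p.Prime) (n : ℕ) (hn : 1 ≤ n) (n₁ n₂ n₃ : ℕ) (z : ℤ)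
    (h1 : (Nat.gcd n (Nat.gcd n₁ (Nat.gcd n₂ n₃)) : ℤ) ∣ z)
    (h2 : ((Nat.gcd (n * p) n₁ * Nat.gcd (n * p) n₂ * Nat.gcd (n * p) n₃ : ℕ) : ℤ) ∣
      z * (n : ℤ) ^ 2 * (p : ℤ) ^ 2) :
    (Nat.gcd (n * p) (Nat.gcd n₁ (Nat.gcd n₂ n₃)) : ℤ) ∣ z := by
  have hnatAbs : (z * (n : ℤ) ^ 2 * (p : ℤ) ^ 2).natAbs = z.natAbs * (n * p) ^ 2 := by
    simp only [Int.natAbs_mul, Int.natAbs_pow, Int.natAbs_natCast]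
    ring
  rw [Int.natCast_dvd] at h1 h2 ⊢
  rw [hnatAbs] at h2
  set N := Nat.gcd n₁ (Nat.gcd n₂ n₃)
  set G := Nat.gcd (n * p) N
  have hG : ∀ m, N ∣ m → G ∣ Nat.gcd (n * p) m := fun _ => Nat.gcd_dvd_gcd_of_dvd_right _
  have hG3 : G ^ 3 ∣ z.natAbs * (n * p) ^ 2 := by
    refine dvd_trans ?_ h2
    rw [pow_three, ← mul_assoc]
    exact mul_dvd_mul (mul_dvd_mul (hG _ (Nat.gcd_dvd_left _ _))
      (hG _ ((Nat.gcd_dvd_right _ _).trans (Nat.gcd_dvd_left _ _))))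
      (hG _ ((Nat.gcd_dvd_right _ _).trans (Nat.gcd_dvd_right _ _)))
  have hGd : G ∣ Nat.gcd n N * p := by
    rw [← Nat.gcd_mul_right]
    exact Nat.gcd_dvd_gcd_of_dvd_right _ (dvd_mul_right N p)
  refine Nat.dvd_of_dvd_mul_prime_of_ordProj_dvd hp hGd h1 ?_
  rcases Nat.ordProj_dvd_or_eq_ordProj_mul_prime (G := G) hp (by omega : n ≠ 0)
    (Nat.gcd_dvd_left _ _) with hPn | hP
  · exact (Nat.dvd_gcd hPn ((Nat.ordProj_dvd G p).trans (Nat.gcd_dvd_right _ _))).trans h1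
  · have hP3 := (pow_dvd_pow_of_dvd (Nat.ordProj_dvd G p) 3).trans hG3
    rw [hP] at hP3 ⊢
    exact Nat.ordProj_dvd_of_ordProj_pow_succ_dvd hp hP3
end

section
/- Let H be a finitely generated abelian group with basis {(eᵢ, nᵢ) : i ∈ I}, let S be an affine space over H^{(2)} = Hom(H, ℤ/2ℤ), and fix a base point σ₀ ∈ S. Define ēᵢ : S → ℤ/2ℤ by ēᵢ(σ₀ + y) = y(eᵢ). Then {(1̄, 2)} ∪ {(ēᵢ, gcd(2, nᵢ)) : i ∈ I} is a basis of A(S, ℤ/2ℤ): the constant function 1̄ has order 2, each ēᵢ has additive order gcd(2, nᵢ) (with gcd(2, 0) = 2), and A(S, ℤ/2ℤ) is the internal direct sum of the cyclic subgroups generated by 1̄ and the ēᵢ. -/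
section Affine

variable (H : Type*) [AddCommGroup H] (S : Type*) [AddTorsor (H →+ ZMod 2) S]

/-- Evaluation at `x ∈ H`, as a homomorphism `Hom(H, ℤ/2ℤ) → ℤ/2ℤ`. -/
def evalAt {H : Type*} [AddCommGroup H] (x : H) : (H →+ ZMod 2) →+ ZMod 2 where
  toFun y := y x
  map_zero' := rfl
  map_add' _ _ := rfl

/-- The function `x̄ : S → ℤ/2ℤ` determined by a base point `σ₀ ∈ S` and `x ∈ H`: it is the
unique affine function with `x̄(σ₀ + y) = y(x)`; as an element of `A(S, ℤ/2ℤ)`. -/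
def ebarA (σ₀ : S) (x : H) : AffineFns H S :=
  ⟨fun σ => (σ -ᵥ σ₀) x, ⟨evalAt x, fun σ y => by
    simp only [vadd_vsub_assoc, AddMonoidHom.add_apply]
    exact add_comm _ _⟩⟩

end Affine

open AddSubgroup DirectSum

theorem AddSubgroup.exists_zmultiples_addMonoidHom {A G : Type*} [AddGroup A] [AddGroup G]
    (a : A) (v : G) (hv : addOrderOf a • v = 0) :
    ∃ ψ : zmultiples a →+ G, ψ ⟨a, mem_zmultiples a⟩ = v := by
  have hgen : ∀ x : zmultiples a, x ∈ zmultiples ⟨a, mem_zmultiples a⟩ := by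
    rintro ⟨_, k, rfl⟩
    exact ⟨k, rfl⟩
  let ε := zmodAddEquivOfGenerator hgen (Nat.card_zmultiples a)
  let ψ := ZMod.lift (addOrderOf a) ⟨zmultiplesHom G v, by simpa using hv⟩
  refine ⟨ψ.comp ε.symm.toAddMonoidHom, ?_⟩
  change ψ (ε.symm _) = v
  rw [zmodAddEquivOfGenerator_symm_apply_generator, ← Int.cast_one, ZMod.lift_coe]
  simp

theorem DirectSum.isInternal_of_dual {A G ι : Type*} [AddCommGroup A] [AddCommGroup G]
    [DecidableEq ι] {B : ι → AddSubgroup A} (φ : ι → A →+ G)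
    (hker : ∀ i j, i ≠ j → B j ≤ (φ i).ker) (hdisj : ∀ i, Disjoint (B i) (φ i).ker)
    (htop : iSup B = ⊤) : IsInternal B := by
  refine ⟨(injective_iff_map_eq_zero _).2 fun z hz => DFinsupp.ext fun i => ?_, ?_⟩
  · have hφ : (φ i).comp (DirectSum.coeAddMonoidHom B) = ((φ i).comp (B i).subtype).comp
        (DFinsupp.evalAddMonoidHom (β := fun i => B i) i) := by
      refine DirectSum.addHom_ext fun j x => ?_
      simp only [AddMonoidHom.comp_apply, DirectSum.coeAddMonoidHom_of]
      change φ i x = φ i (of (fun i => B i) j x i)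
      by_cases hji : j = i
      · subst hji
        rw [of_eq_same]
      · rw [of_eq_of_ne _ _ _ (Ne.symm hji), ZeroMemClass.coe_zero, map_zero]
        exact hker i j (Ne.symm hji) x.2
    have := DFunLike.congr_fun hφ z
    simp only [AddMonoidHom.comp_apply, hz, map_zero] at this
    exact Subtype.ext ((AddSubgroup.disjoint_def.1 (hdisj i)) (z i).2 this.symm)
  · have : iSup B ≤ (DirectSum.coeAddMonoidHom B).range :=
      iSup_le fun i x hx => ⟨of _ i ⟨x, hx⟩, DirectSum.coeAddMonoidHom_of _ _ _⟩
    exact fun a => (htop ▸ this) (mem_top a)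

theorem DirectSum.IsInternal.zmultiples_addMonoidHom_ext {H G I : Type*} [AddCommGroup H]
    [AddMonoid G] [DecidableEq I] {e : I → H} (he : IsInternal fun i => zmultiples (e i))
    {f g : H →+ G} (h : ∀ i, f (e i) = g (e i)) : f = g := by
  refine (AddMonoidHom.cancel_right he.surjective).1 (DirectSum.addHom_ext fun i x => ?_)
  simp only [AddMonoidHom.comp_apply, coeAddMonoidHom_of]
  exact (zmultiples_le.2 (h i) : zmultiples (e i) ≤ f.eqLocus g) x.2

theorem AddSubgroup.disjoint_zmultiples_ker {A G : Type*} [AddGroup A] [AddZeroClass G] {g : A}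
    (hg : 2 • g = 0) (φ : A →+ G) (hφ : φ g = 0 → g = 0) : Disjoint (zmultiples g) φ.ker := by
  have h2m (m : ℤ) : (2 * m) • g = 0 := by
    rw [mul_zsmul', two_zsmul, ← two_nsmul, hg, zsmul_zero]
  refine AddSubgroup.disjoint_def.2 fun hx hk => ?_
  obtain ⟨k, rfl⟩ := mem_zmultiples_iff.1 hx
  obtain ⟨m, rfl | rfl⟩ := Int.even_or_odd' k
  · exact h2m m
  · rw [add_zsmul, h2m, one_zsmul, zero_add] at hk ⊢
    exact hφ hk

theorem AddMonoidHom.apply_eq_zero_of_not_two_dvd {A : Type*} [AddMonoid A] (y : A →+ ZMod 2)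
    {a : A} (h : ¬ 2 ∣ addOrderOf a) : y a = 0 := by
  have hdvd : addOrderOf (y a) ∣ 2 :=
    addOrderOf_dvd_of_nsmul_eq_zero (by rw [two_nsmul, CharTwo.add_self_eq_zero])
  rcases (Nat.dvd_prime Nat.prime_two).1 hdvd with h1 | h2
  · exact AddMonoid.addOrderOf_eq_one_iff.1 h1
  · exact absurd (h2 ▸ addOrderOf_map_dvd y a) h

namespace IsCyclicBasis

variable {H I : Type*} [AddCommGroup H] [Fintype I] [DecidableEq I] {e : I → H} {n : I → ℕ}

theorem exists_addMonoidHom (hb : IsCyclicBasis e n) {G : Type*} [AddCommGroup G] (v : I → G)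
    (hv : ∀ i, n i • v i = 0) : ∃ f : H →+ G, ∀ i, f (e i) = v i := by
  choose ψ hψ using fun i => exists_zmultiples_addMonoidHom (e i) (v i) (hb.1 i ▸ hv i)
  let θ := AddEquiv.ofBijective _ hb.2
  refine ⟨(toAddMonoid ψ).comp θ.symm.toAddMonoidHom, fun i => ?_⟩
  have hθ : θ (of _ i ⟨e i, mem_zmultiples _⟩) = e i := coeAddMonoidHom_of _ _ _
  rw [AddMonoidHom.comp_apply, ← hθ, AddEquiv.coe_toAddMonoidHom, AddEquiv.symm_apply_apply,
    toAddMonoid_of, hψ]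

theorem exists_dual (hb : IsCyclicBasis e n) :
    ∃ χ : I → H →+ ZMod 2, (∀ i j, i ≠ j → χ i (e j) = 0) ∧ ∀ i, 2 ∣ n i → χ i (e i) = 1 := by
  have : ∀ i, ∃ χ : H →+ ZMod 2, ∀ j, χ (e j) = if j = i ∧ 2 ∣ n i then 1 else 0 :=
    fun i => hb.exists_addMonoidHom _ fun j => by
      split_ifs with h
      · simpa [h.1] using (ZMod.natCast_eq_zero_iff _ _).2 h.2
      · exact smul_zero _
  choose χ hχ using this
  exact ⟨χ, fun i j hij => by simp [hχ, hij.symm], fun i hi => by simp [hχ, hi]⟩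

theorem eq_sum_smul (hb : IsCyclicBasis e n) {χ : I → H →+ ZMod 2}
    (hne : ∀ i j, i ≠ j → χ i (e j) = 0) (hself : ∀ i, 2 ∣ n i → χ i (e i) = 1)
    (y : H →+ ZMod 2) : y = ∑ i, y (e i) • χ i := by
  refine hb.2.zmultiples_addMonoidHom_ext fun j => ?_
  rw [AddMonoidHom.finsetSum_apply, Finset.sum_eq_single j (fun i _ hij => by simp [hne i j hij])
    (by simp)]
  by_cases h : 2 ∣ n j
  · simp [hself j h]
  · simp [y.apply_eq_zero_of_not_two_dvd (hb.1 j ▸ h)]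

end IsCyclicBasis

section Affine

variable {H S : Type*} [AddCommGroup H] [AddTorsor (H →+ ZMod 2) S]

@[simp]
theorem oneAff_apply (σ : S) : (oneAff H S : S → ZMod 2) σ = 1 := rfl

@[simp]
theorem ebarA_apply (σ₀ σ : S) (x : H) : (ebarA H S σ₀ x : S → ZMod 2) σ = (σ -ᵥ σ₀) x := rfl

theorem AffineFns.two_nsmul_eq_zero (f : AffineFns H S) : 2 • f = 0 :=
  Subtype.ext <| funext fun σ => by simp [two_nsmul, CharTwo.add_self_eq_zero]

theorem addOrderOf_oneAff : addOrderOf (oneAff H S) = 2 := by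
  have : Fact (Nat.Prime 2) := ⟨Nat.prime_two⟩
  refine addOrderOf_eq_prime (AffineFns.two_nsmul_eq_zero _) fun h => ?_
  obtain ⟨σ⟩ := (inferInstance : Nonempty S)
  simpa using congr_fun (congr_arg Subtype.val h) σ

def AffineFns.eval (σ : S) : AffineFns H S →+ ZMod 2 :=
  (Pi.evalAddMonoidHom (fun _ : S => ZMod 2) σ).comp (AffineFns H S).subtype

@[simp]
theorem AffineFns.eval_apply (σ : S) (f : AffineFns H S) : eval σ f = (f : S → ZMod 2) σ := rfl

theorem iSup_zmultiples_oneAff_ebarA_eq_top {I : Type*} [Fintype I] {x : I → H}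
    {χ : I → H →+ ZMod 2} (hχ : ∀ y : H →+ ZMod 2, y = ∑ i, y (x i) • χ i) (σ₀ : S) :
    ⨆ o : Option I, zmultiples (o.elim (oneAff H S) fun i => ebarA H S σ₀ (x i)) = ⊤ := by
  refine eq_top_iff.2 fun f _ => ?_
  obtain ⟨l, hl⟩ := f.2
  have hf : f = (f.1 σ₀).val • oneAff H S + ∑ i, (l (χ i)).val • ebarA H S σ₀ (x i) := by
    refine Subtype.ext <| funext fun σ => ?_
    have hσ : f.1 σ = f.1 σ₀ + l (σ -ᵥ σ₀) := by simpa using hl σ₀ (σ -ᵥ σ₀)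
    have hl' : l (σ -ᵥ σ₀) = ∑ i, (σ -ᵥ σ₀) (x i) * l (χ i) := by
      conv_lhs => rw [hχ (σ -ᵥ σ₀)]
      simp [map_sum, ZMod.map_smul]
    simp only [AddSubgroup.coe_add, AddSubmonoidClass.coe_finsetSum, AddSubmonoidClass.coe_nsmul,
      Pi.add_apply, Finset.sum_apply, Pi.smul_apply, oneAff_apply, ebarA_apply]
    simp only [nsmul_eq_mul, ZMod.natCast_zmod_val, one_mul, hσ, hl', mul_comm]
  rw [hf]
  exact add_mem (mem_iSup_of_mem none (nsmul_mem (mem_zmultiples _) _))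
    (sum_mem fun i _ => mem_iSup_of_mem (some i) (nsmul_mem (mem_zmultiples _) _))

end Affine

namespace IsCyclicBasis

variable {H S I : Type*} [AddCommGroup H] [AddTorsor (H →+ ZMod 2) S] [Fintype I] [DecidableEq I]
  {e : I → H} {n : I → ℕ}

theorem ebarA_eq_zero (hb : IsCyclicBasis e n) (σ₀ : S) {i : I} (h : ¬ 2 ∣ n i) :
    ebarA H S σ₀ (e i) = 0 :=
  Subtype.ext <| funext fun σ => (σ -ᵥ σ₀).apply_eq_zero_of_not_two_dvd (hb.1 i ▸ h)

theorem addOrderOf_ebarA (hb : IsCyclicBasis e n) (σ₀ : S) (i : I) :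
    addOrderOf (ebarA H S σ₀ (e i)) = Nat.gcd 2 (n i) := by
  by_cases h : 2 ∣ n i
  · obtain ⟨χ, -, hself⟩ := hb.exists_dual
    have : Fact (Nat.Prime 2) := ⟨Nat.prime_two⟩
    rw [Nat.gcd_eq_left h]
    refine addOrderOf_eq_prime (AffineFns.two_nsmul_eq_zero _) fun h0 => ?_
    simpa [hself i h] using congr_fun (congr_arg Subtype.val h0) (χ i +ᵥ σ₀)
  · rw [(Nat.prime_two.coprime_iff_not_dvd.2 h).gcd_eq_one, AddMonoid.addOrderOf_eq_one_iff]
    exact hb.ebarA_eq_zero σ₀ h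

theorem isInternal_zmultiples_oneAff_ebarA (hb : IsCyclicBasis e n) (σ₀ : S) :
    IsInternal fun o : Option I =>
      zmultiples (o.elim (oneAff H S) fun i => ebarA H S σ₀ (e i)) := by
  obtain ⟨χ, hne, hself⟩ := hb.exists_dual
  let φ : Option I → AffineFns H S →+ ZMod 2 :=
    fun o => o.elim (AffineFns.eval σ₀) fun i => AffineFns.eval (χ i +ᵥ σ₀) - AffineFns.eval σ₀
  refine isInternal_of_dual φ ?_ ?_
    (iSup_zmultiples_oneAff_ebarA_eq_top (hb.eq_sum_smul hne hself) σ₀)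
  · rintro (_ | i) (_ | j) hij <;> rw [zmultiples_le, AddMonoidHom.mem_ker]
    · exact absurd rfl hij
    · simp [φ]
    · simp [φ]
    · simp [φ, hne i j fun h => hij (congrArg some h)]
  · rintro (_ | i) <;> refine disjoint_zmultiples_ker (AffineFns.two_nsmul_eq_zero _) _ fun h => ?_
    · simp [φ] at h
    · by_cases hi : 2 ∣ n i
      · simp [φ, hself i hi] at h
      · exact hb.ebarA_eq_zero σ₀ hi

end IsCyclicBasis

/-- Let `H` be a finitely generated abelian group with basis
`{(eᵢ, nᵢ) : i ∈ I}`, `S` an affine space over `H⁽²⁾ = Hom(H, ℤ/2ℤ)` with base point `σ₀`,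
and `ēᵢ : S → ℤ/2ℤ` defined by `ēᵢ(σ₀ + y) = y(eᵢ)`. Then
`{(1̄, 2)} ∪ {(ēᵢ, gcd(2, nᵢ)) : i ∈ I}` is a basis of `A(S, ℤ/2ℤ)`. -/
theorem stmt13 (H : Type*) [AddCommGroup H] (I : Type*) [Fintype I] [DecidableEq I]
    (e : I → H) (n : I → ℕ) (hb : IsCyclicBasis e n)
    (S : Type*) [AddTorsor (H →+ ZMod 2) S] (σ₀ : S) :
    IsCyclicBasis
      (fun o : Option I => o.elim (oneAff H S) (fun i => ebarA H S σ₀ (e i)))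
      (fun o : Option I => o.elim 2 (fun i => Nat.gcd 2 (n i))) := by
  refine ⟨?_, hb.isInternal_zmultiples_oneAff_ebarA σ₀⟩
  rintro (_ | i)
  · exact addOrderOf_oneAff
  · exact hb.addOrderOf_ebarA σ₀ i
end

section
/- Let H be a finitely generated abelian group with basis {(eᵢ, nᵢ) : i ∈ I}, let S be an affine space over H^{(2)} = Hom(H, ℤ/2ℤ) with base point σ₀, define ēᵢ : S → ℤ/2ℤ by ēᵢ(σ₀ + y) = y(eᵢ), and let P be the subgroup of H × A(S, ℤ/2ℤ) consisting of pairs (x, f) with f(σ + y) = f(σ) + y(x) for all σ ∈ S, y ∈ H^{(2)}. Then {((0, 1̄), 2)} ∪ {((eᵢ, ēᵢ), nᵢ) : i ∈ I} is a basis of P: the element (0, 1̄) has order 2, each (eᵢ, ēᵢ) has additive order nᵢ, and P is the internal direct sum of the cyclic subgroups they generate. -/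
section Affine

variable (H : Type*) [AddCommGroup H] (S : Type*) [AddTorsor (H →+ ZMod 2) S]

/-- The group `P`: the subgroup of `H × Map(S, ℤ/2ℤ)` of pairs `(x, f)` such that
`f(σ + y) = f(σ) + y(x)` for all `σ ∈ S` and `y ∈ Hom(H, ℤ/2ℤ)` (such an `f` is
automatically an affine function). -/
def Pgrp : AddSubgroup (H × (S → ZMod 2)) where
  carrier := {p | ∀ (σ : S) (y : H →+ ZMod 2), p.2 (y +ᵥ σ) = p.2 σ + y p.1}
  add_mem' := by
    intro p q hp hq σ y
    simp only [Prod.snd_add, Pi.add_apply, Prod.fst_add, map_add, hp σ y, hq σ y]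
    abel
  zero_mem' := by intro σ y; simp
  neg_mem' := by
    intro p hp σ y
    simp only [Prod.snd_neg, Pi.neg_apply, Prod.fst_neg, map_neg, hp σ y]
    abel

/-- The distinguished element `(0, 1̄)` of `P`. -/
def pOne : Pgrp H S :=
  ⟨(0, fun _ => 1), fun σ y => by simp⟩

/-- The element `(x, x̄)` of `P`, where `x̄ : S → ℤ/2ℤ` is the affine function determined by
the base point `σ₀` via `x̄(σ₀ + y) = y(x)`. -/
def pGen (σ₀ : S) (x : H) : Pgrp H S :=
  ⟨(x, fun σ => (σ -ᵥ σ₀) x), fun σ y => by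
    simp only [vadd_vsub_assoc, AddMonoidHom.add_apply]
    exact add_comm _ _⟩

end Affine

/-!
Evaluating the function component at `σ₀` identifies `P` with `ℤ/2ℤ × H`: a pair `(x, f) ∈ P` is
determined by `f σ₀` and `x`, because `f (σ₀ + y) = f σ₀ + y x`. This isomorphism sends `(0, 1̄)`
to `(1, 0)` and `(eᵢ, ēᵢ)` to `(0, eᵢ)`, and a generator of `ℤ/2ℤ` together with a basis of `H`
is a basis of `ℤ/2ℤ × H`.
-/

namespace DirectSum

variable {ι : Type*} [DecidableEq ι] [Fintype ι]

theorem isInternal_iff_bijective_sum {M S : Type*}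
    [AddCommMonoid M] [SetLike S M] [AddSubmonoidClass S M] (C : ι → S) :
    IsInternal C ↔ Function.Bijective (fun x : (i : ι) → C i => ∑ i, (x i : M)) := by
  classical
  have h : ⇑(DirectSum.coeAddMonoidHom C) =
      (fun x : (i : ι) → C i => ∑ i, (x i : M)) ∘ DFinsupp.equivFunOnFintype := by
    ext x
    rw [coeAddMonoidHom_eq_dfinsuppSum, DFinsupp.sum_eq_sum_fintype] <;> simp
  rw [IsInternal, h, Equiv.bijective_comp]

variable {A B : Type*} [AddCommGroup A] [AddCommGroup B]

theorem IsInternal.map_addEquiv {C : ι → AddSubgroup A} (h : IsInternal C) (f : A ≃+ B) :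
    IsInternal fun i => (C i).map f.toAddMonoidHom := by
  rw [isInternal_iff_bijective_sum] at h ⊢
  let g : ((i : ι) → C i) ≃ ((i : ι) → (C i).map f.toAddMonoidHom) :=
    Equiv.piCongrRight fun i => (f.addSubgroupMap (C i)).toEquiv
  have hsum : (fun y : (i : ι) → (C i).map f.toAddMonoidHom => ∑ i, (y i : B)) ∘ g =
      f ∘ fun x : (i : ι) → C i => ∑ i, (x i : A) := by
    ext x
    exact (map_sum f _ _).symm
  exact (g.bijective_comp _).mp (hsum ▸ f.bijective.comp h)

theorem IsInternal.option_prod {D : ι → AddSubgroup B} (h : IsInternal D) :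
    IsInternal fun o : Option ι =>
      o.elim ((⊤ : AddSubgroup A).map (AddMonoidHom.inl A B))
        fun i => (D i).map (AddMonoidHom.inr A B) := by
  rw [isInternal_iff_bijective_sum] at h ⊢
  let E : Option ι → AddSubgroup (A × B) := fun o =>
    o.elim ((⊤ : AddSubgroup A).map (AddMonoidHom.inl A B))
      fun i => (D i).map (AddMonoidHom.inr A B)
  let g : ↥(⊤ : AddSubgroup A) × ((i : ι) → D i) ≃ ((o : Option ι) → E o) :=
    (Equiv.prodCongr
      ((⊤ : AddSubgroup A).equivMapOfInjective _ fun _ _ h => congrArg Prod.fst h).toEquiv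
      (Equiv.piCongrRight fun i =>
        ((D i).equivMapOfInjective _ fun _ _ h => congrArg Prod.snd h).toEquiv)).trans
      (Equiv.piOptionEquivProd (β := fun o => E o)).symm
  have hsum : (fun x => ∑ o, (x o : A × B)) ∘ g =
      Prod.map Subtype.val fun y : (i : ι) → D i => ∑ i, (y i : B) := by
    funext ⟨a, y⟩
    rw [Function.comp_apply, Fintype.sum_option]
    change ((a : A), (0 : B)) + ∑ i, ((0 : A), (y i : B)) = ((a : A), ∑ i, (y i : B))
    ext <;> simp [Prod.fst_sum, Prod.snd_sum]
  exact (g.bijective_comp _).mp (hsum ▸ (AddSubgroup.topEquiv (G := A)).bijective.prodMap h)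

end DirectSum

namespace IsCyclicBasis

variable {I A B : Type*} [Fintype I] [DecidableEq I] [AddCommGroup A] [AddCommGroup B]
  {e : I → A} {n : I → ℕ}

theorem map_addEquiv (h : IsCyclicBasis e n) (f : A ≃+ B) :
    IsCyclicBasis (fun i => f (e i)) n := by
  refine ⟨fun i => (addOrderOf_injective f.toAddMonoidHom f.injective (e i)).trans (h.1 i), ?_⟩
  simpa only [AddMonoidHom.map_zmultiples, AddEquiv.coe_toAddMonoidHom] using h.2.map_addEquiv f

theorem option_prod {C : Type*} [AddCommGroup C] {c : C} {m : ℕ} (hc : addOrderOf c = m)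
    (htop : AddSubgroup.zmultiples c = ⊤) (h : IsCyclicBasis e n) :
    IsCyclicBasis (fun o : Option I => o.elim (c, 0) fun i => (0, e i)) fun o => o.elim m n := by
  refine ⟨?_, ?_⟩
  · rintro (_ | i)
    · exact (addOrderOf_injective (AddMonoidHom.inl C A)
        (fun _ _ h => congrArg Prod.fst h) c).trans hc
    · exact (addOrderOf_injective (AddMonoidHom.inr C A)
        (fun _ _ h => congrArg Prod.snd h) (e i)).trans (h.1 i)
  · have hzmultiples :
        (fun o : Option I => AddSubgroup.zmultiples (o.elim (c, 0) fun i => (0, e i))) =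
        fun o => o.elim ((⊤ : AddSubgroup C).map (AddMonoidHom.inl C A))
          fun i => (AddSubgroup.zmultiples (e i)).map (AddMonoidHom.inr C A) := by
      funext o
      cases o
      · rw [← htop]
        exact ((AddMonoidHom.inl C A).map_zmultiples c).symm
      · exact ((AddMonoidHom.inr C A).map_zmultiples _).symm
    exact hzmultiples ▸ h.2.option_prod

end IsCyclicBasis

theorem ZMod.zmultiples_one_eq_top (n : ℕ) : AddSubgroup.zmultiples (1 : ZMod n) = ⊤ :=
  (AddSubgroup.eq_top_iff' _).2 fun c => by
    obtain ⟨k, rfl⟩ := ZMod.intCast_surjective c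
    exact ⟨k, by simp⟩

namespace Pgrp

variable {H : Type*} [AddCommGroup H] {S : Type*} [AddTorsor (H →+ ZMod 2) S]

def equivProd (σ₀ : S) : Pgrp H S ≃+ ZMod 2 × H where
  toFun p := ((p : H × (S → ZMod 2)).2 σ₀, (p : H × (S → ZMod 2)).1)
  invFun c := ⟨(c.2, fun σ => c.1 + (σ -ᵥ σ₀) c.2), fun σ y => by
    simp only [vadd_vsub_assoc, AddMonoidHom.add_apply]
    abel⟩
  left_inv p := by
    refine Subtype.ext (Prod.ext rfl (funext fun σ => ?_))
    simpa [vsub_vadd] using (p.2 σ₀ (σ -ᵥ σ₀)).symm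
  right_inv c := by simp
  map_add' _ _ := rfl

theorem equivProd_pOne (σ₀ : S) : equivProd σ₀ (pOne H S) = (1, 0) := rfl

theorem equivProd_pGen (σ₀ : S) (x : H) : equivProd σ₀ (pGen H S σ₀ x) = (0, x) := by
  simp [equivProd, pGen]

end Pgrp

/-- Let `H` be a finitely generated abelian group with basis
`{(eᵢ, nᵢ) : i ∈ I}`, `S` an affine space over `H⁽²⁾ = Hom(H, ℤ/2ℤ)` with base point `σ₀`,
`ēᵢ(σ₀ + y) = y(eᵢ)`, and `P` the subgroup of pairs `(x, f)` with `f(σ+y) = f(σ) + y(x)`.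
Then `{((0, 1̄), 2)} ∪ {((eᵢ, ēᵢ), nᵢ) : i ∈ I}` is a basis of `P`. -/
theorem stmt15 (H : Type*) [AddCommGroup H] (I : Type*) [Fintype I] [DecidableEq I]
    (e : I → H) (n : I → ℕ) (hb : IsCyclicBasis e n)
    (S : Type*) [AddTorsor (H →+ ZMod 2) S] (σ₀ : S) :
    IsCyclicBasis
      (fun o : Option I => o.elim (pOne H S) (fun i => pGen H S σ₀ (e i)))
      (fun o : Option I => o.elim 2 (fun i => n i)) := by
  have hprod := (hb.option_prod (ZMod.addOrderOf_one 2)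
    (ZMod.zmultiples_one_eq_top 2)).map_addEquiv (Pgrp.equivProd σ₀).symm
  convert hprod using 2 with o
  cases o <;> simp [AddEquiv.eq_symm_apply, Pgrp.equivProd_pOne, Pgrp.equivProd_pGen]
end
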